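/- arXiv:math-ph/0011046 — 3 statements merged into one kernel-verified Lean document; each statement's English description precedes it below -/
import Mathlib

section
/- Let d ≥ 1 and let a ≥ b > 0 with a > d. Then there exists a constant C, depending only on a, b and d, such that for all functions f, g : ℤ^d → ℝ satisfying |f(x)| ≤ (|x|+1)^{−a} and |g(x)| ≤ (|x|+1)^{−b} for all x ∈ ℤ^d, the convolution satisfies |(f*g)(x)| ≤ C(|x|+1)^{−b} for all x ∈ ℤ^d. -/
/-!
Write `⟨x⟩ = |x| + 1`. Since `⟨x⟩ ≤ ⟨x - y⟩ + ⟨y⟩`, in every term of the convolution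
either `⟨y⟩ ≥ ⟨x⟩ / 2`, so that `⟨y⟩ ^ (-b) ≤ 2 ^ b ⟨x⟩ ^ (-b)`, or `⟨x - y⟩ ≥ ⟨x⟩ / 2` and
`⟨y⟩ ≤ ⟨x⟩`, so that `⟨x - y⟩ ^ (-a) ⟨y⟩ ^ (-b) ≤ 2 ^ a ⟨x⟩ ^ (-b) ⟨y⟩ ^ (-a)` because `b ≤ a`.
Either way the term is at most `2 ^ a ⟨x⟩ ^ (-b) (⟨x - y⟩ ^ (-a) + ⟨y⟩ ^ (-a))`, whose sum over
`y` is `2 ^ (a + 1) ⟨x⟩ ^ (-b)` times `∑ ⟨y⟩ ^ (-a)`. This sum is finite for `a > d`: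
`⟨y⟩ ^ (-a) ≤ ∏ i, (|y i| + 1) ^ (-a / d)`, a product of one-dimensional `p`-series with
`p = a / d > 1`.
-/

open scoped BigOperators

/-- The Euclidean norm of a point of `ℤ^d`. -/
noncomputable def znorm {d : ℕ} (x : Fin d → ℤ) : ℝ :=
  Real.sqrt (∑ i, ((x i : ℝ)) ^ 2)

lemma znorm_add_one_pos {d : ℕ} (x : Fin d → ℤ) : 0 < znorm x + 1 := by
  unfold znorm
  positivity

lemma znorm_eq_norm {d : ℕ} (x : Fin d → ℤ) :
    znorm x = ‖WithLp.toLp 2 (fun i => (x i : ℝ))‖ := by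
  simp [EuclideanSpace.norm_eq, znorm]

lemma znorm_le_znorm_sub_add {d : ℕ} (x y : Fin d → ℤ) : znorm x ≤ znorm (x - y) + znorm y := by
  have hsplit : WithLp.toLp 2 (fun i => (x i : ℝ)) =
      WithLp.toLp 2 (fun i => ((x - y) i : ℝ)) + WithLp.toLp 2 (fun i => (y i : ℝ)) := by
    rw [← WithLp.toLp_add]
    congr 1
    ext i
    simp
  rw [znorm_eq_norm, znorm_eq_norm, znorm_eq_norm, hsplit]
  exact norm_add_le _ _

lemma abs_le_znorm {d : ℕ} (x : Fin d → ℤ) (i : Fin d) : |(x i : ℝ)| ≤ znorm x := by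
  rw [← Real.sqrt_sq_eq_abs]
  exact Real.sqrt_le_sqrt
    (Finset.single_le_sum (fun j _ => sq_nonneg (x j : ℝ)) (Finset.mem_univ i))

lemma summable_abs_int_add_one_rpow_neg {p : ℝ} (hp : 1 < p) :
    Summable fun n : ℤ => (|(n : ℝ)| + 1) ^ (-p) := by
  refine (Real.summable_abs_int_rpow hp).of_norm_bounded_eventually ?_
  filter_upwards [Filter.eventually_cofinite_ne 0] with n hn
  rw [Real.norm_of_nonneg (by positivity)]
  exact Real.rpow_le_rpow_of_nonpos (by positivity) (by linarith) (by linarith)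

lemma summable_prod_apply_of_nonneg {α : Type*} {w : α → ℝ} (hw0 : ∀ t, 0 ≤ w t)
    (hw : Summable w) (n : ℕ) :
    Summable fun y : Fin n → α => ∏ i, w (y i) := by
  induction n with
  | zero => exact .of_finite
  | succ n ih =>
    refine (Fin.consEquiv fun _ => α).summable_iff.mp
      ((hw.mul_of_nonneg ih hw0 fun _ => Finset.prod_nonneg fun _ _ => hw0 _).congr fun p => ?_)
    simp [Fin.consEquiv, Fin.prod_univ_succ]

lemma summable_znorm_add_one_rpow_neg {d : ℕ} {a : ℝ} (had : (d : ℝ) < a) :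
    Summable fun y : Fin d → ℤ => (znorm y + 1) ^ (-a) := by
  rcases Nat.eq_zero_or_pos d with rfl | hd
  · exact .of_finite
  have hd' : (0 : ℝ) < d := by exact_mod_cast hd
  have hp : 1 < a / d := (one_lt_div hd').mpr had
  refine .of_nonneg_of_le (fun y => (Real.rpow_pos_of_pos (znorm_add_one_pos y) _).le)
    (fun y => ?_) (summable_prod_apply_of_nonneg (fun _ => by positivity)
      (summable_abs_int_add_one_rpow_neg hp) d)
  have hy := znorm_add_one_pos y
  have hsplit : (znorm y + 1) ^ (-a) = ∏ _i : Fin d, (znorm y + 1) ^ (-(a / d)) := by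
    rw [Finset.prod_const, Finset.card_univ, Fintype.card_fin, ← Real.rpow_mul_natCast hy.le]
    field_simp
  rw [hsplit]
  exact Finset.prod_le_prod (fun _ _ => by positivity) fun i _ =>
    Real.rpow_le_rpow_of_nonpos (by positivity) (by linarith [abs_le_znorm y i])
      (by linarith [div_pos (by linarith : (0:ℝ) < a) hd'])

lemma rpow_neg_le_two_rpow_mul {c X W : ℝ} (hc : 0 ≤ c) (hX : 0 < X) (hXW : X ≤ 2 * W) :
    W ^ (-c) ≤ 2 ^ c * X ^ (-c) := by
  calc W ^ (-c) ≤ (X / 2) ^ (-c) :=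
        Real.rpow_le_rpow_of_nonpos (by positivity) (by linarith) (by linarith)
    _ = 2 ^ c * X ^ (-c) := by
        rw [Real.div_rpow hX.le zero_le_two, Real.rpow_neg zero_le_two, div_inv_eq_mul, mul_comm]

lemma rpow_neg_mul_rpow_neg_le {a b X Y Z : ℝ} (hb : 0 ≤ b) (hba : b ≤ a)
    (hX : 0 < X) (hY : 0 < Y) (hZ : 0 < Z) (hXYZ : X ≤ Z + Y) :
    Z ^ (-a) * Y ^ (-b) ≤ 2 ^ a * X ^ (-b) * (Z ^ (-a) + Y ^ (-a)) := by
  have hZa : 0 ≤ Z ^ (-a) := by positivity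
  have hYa : 0 ≤ Y ^ (-a) := by positivity
  have hXb : 0 ≤ X ^ (-b) := by positivity
  rcases le_or_gt X (2 * Y) with hXY | hYX
  · have h2 : (2 : ℝ) ^ b ≤ 2 ^ a := Real.rpow_le_rpow_of_exponent_le one_le_two hba
    calc Z ^ (-a) * Y ^ (-b) ≤ Z ^ (-a) * (2 ^ a * X ^ (-b)) :=
          mul_le_mul_of_nonneg_left ((rpow_neg_le_two_rpow_mul hb hX hXY).trans
            (mul_le_mul_of_nonneg_right h2 hXb)) hZa
      _ ≤ 2 ^ a * X ^ (-b) * (Z ^ (-a) + Y ^ (-a)) := by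
          nlinarith [mul_nonneg (mul_nonneg (by positivity : (0 : ℝ) ≤ 2 ^ a) hXb) hYa]
  · have hZ' : Z ^ (-a) ≤ 2 ^ a * X ^ (-a) :=
      rpow_neg_le_two_rpow_mul (hb.trans hba) hX (by linarith)
    have hY' : Y ^ (-b) ≤ X ^ (a - b) * Y ^ (-a) := by
      rw [show Y ^ (-b) = Y ^ (a - b) * Y ^ (-a) by rw [← Real.rpow_add hY]; ring_nf]
      exact mul_le_mul_of_nonneg_right (Real.rpow_le_rpow hY.le (by linarith) (by linarith)) hYa
    calc Z ^ (-a) * Y ^ (-b) ≤ 2 ^ a * X ^ (-a) * (X ^ (a - b) * Y ^ (-a)) :=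
          mul_le_mul hZ' hY' (by positivity) (by positivity)
      _ = 2 ^ a * X ^ (-b) * Y ^ (-a) := by
          rw [show X ^ (-b) = X ^ (-a) * X ^ (a - b) by rw [← Real.rpow_add hX]; ring_nf]
          ring
      _ ≤ 2 ^ a * X ^ (-b) * (Z ^ (-a) + Y ^ (-a)) :=
          mul_le_mul_of_nonneg_left (le_add_of_nonneg_left hZa) (by positivity)

theorem stmt1_general (d : ℕ) (a b : ℝ) (hb : 0 < b) (hba : b ≤ a)
    (had : (d : ℝ) < a) :
    ∃ C : ℝ, 0 < C ∧ ∀ f g : (Fin d → ℤ) → ℝ,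
      (∀ x, |f x| ≤ (znorm x + 1) ^ (-a)) →
      (∀ x, |g x| ≤ (znorm x + 1) ^ (-b)) →
      ∀ x : Fin d → ℤ,
        |∑' y : Fin d → ℤ, f (x - y) * g y| ≤ C * (znorm x + 1) ^ (-b) := by
  set u : (Fin d → ℤ) → ℝ := fun y => (znorm y + 1) ^ (-a)
  have hu0 : ∀ y, 0 ≤ u y := fun y => (Real.rpow_pos_of_pos (znorm_add_one_pos y) _).le
  have hu : Summable u := summable_znorm_add_one_rpow_neg had
  have hS : 0 < ∑' y, u y := hu.tsum_pos hu0 0 (Real.rpow_pos_of_pos (znorm_add_one_pos 0) _)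
  refine ⟨2 * 2 ^ a * ∑' y, u y, by positivity, fun f g hf hg x => ?_⟩
  have hterm : ∀ y, ‖f (x - y) * g y‖ ≤ 2 ^ a * (znorm x + 1) ^ (-b) * (u (x - y) + u y) := by
    intro y
    calc ‖f (x - y) * g y‖ ≤ u (x - y) * (znorm y + 1) ^ (-b) := by
          rw [Real.norm_eq_abs, abs_mul]
          exact mul_le_mul (hf _) (hg _) (abs_nonneg _) (hu0 _)
      _ ≤ 2 ^ a * (znorm x + 1) ^ (-b) * (u (x - y) + u y) :=
          rpow_neg_mul_rpow_neg_le hb.le hba (znorm_add_one_pos x) (znorm_add_one_pos y)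
            (znorm_add_one_pos _) (by linarith [znorm_le_znorm_sub_add x y])
  have hux : HasSum (fun y => u (x - y)) (∑' y, u y) :=
    (Equiv.subLeft x).hasSum_iff.mpr hu.hasSum
  calc |∑' y, f (x - y) * g y|
      ≤ 2 ^ a * (znorm x + 1) ^ (-b) * (∑' y, u y + ∑' y, u y) :=
        tsum_of_norm_bounded ((hux.add hu.hasSum).mul_left _) hterm
    _ = 2 * 2 ^ a * (∑' y, u y) * (znorm x + 1) ^ (-b) := by ring

theorem stmt1 (d : ℕ) (hd : 1 ≤ d) (a b : ℝ) (hb : 0 < b) (hba : b ≤ a)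
    (had : (d : ℝ) < a) :
    ∃ C : ℝ, 0 < C ∧ ∀ f g : (Fin d → ℤ) → ℝ,
      (∀ x, |f x| ≤ (znorm x + 1) ^ (-a)) →
      (∀ x, |g x| ≤ (znorm x + 1) ^ (-b)) →
      ∀ x : Fin d → ℤ,
        |∑' y : Fin d → ℤ, f (x - y) * g y| ≤ C * (znorm x + 1) ^ (-b) :=
  stmt1_general d a b hb hba had
end

section
/- Let d ≥ 1 and let a ≥ b > 0 with a < d and a + b > d. Then there exists a constant C, depending only on a, b and d, such that for all functions f, g : ℤ^d → ℝ satisfying |f(x)| ≤ (|x|+1)^{−a} and |g(x)| ≤ (|x|+1)^{−b} for all x ∈ ℤ^d, the convolution satisfies |(f*g)(x)| ≤ C(|x|+1)^{d−(a+b)} for all x ∈ ℤ^d. -/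
open scoped BigOperators

/-!
Replace `|x| + 1` by the comparable integer weight `⟨y⟩ = ‖y‖_∞ + 1`. Dyadic counting (the shell
`2^j ≤ ⟨y⟩ < 2^(j+1)` has `O(2^(jd))` points) gives `∑_{⟨y⟩ ≤ K} ⟨y⟩^(-s) = O(K^(d-s))` for
`0 ≤ s < d` and `∑_{⟨y⟩ ≥ M} ⟨y⟩^(-t) = O(M^(d-t))` for `t > d`. With `R = ⟨x⟩`, split the
convolution sum into the `y` near `x` (`⟨x - y⟩ ≤ R/2`, so `⟨y⟩ ≥ R/2`), the far `y`
(`⟨y⟩ > 2R`, so `⟨x - y⟩ ≥ ⟨y⟩/2`) and the middle range (`⟨x - y⟩ ≥ R/2`, `⟨y⟩ ≤ 2R`): each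
piece is `O(R^(d-a-b))` by one of the two counting bounds. The bound is uniform over finite
partial sums, which also gives absolute summability.
-/

open Finset

lemma rpow_neg_le_of_le_two_mul {r w a : ℝ} (hr : 0 < r) (ha : 0 ≤ a) (h : r ≤ 2 * w) :
    w ^ (-a) ≤ 2 ^ a * r ^ (-a) :=
  calc w ^ (-a) ≤ (2⁻¹ * r) ^ (-a) :=
        Real.rpow_le_rpow_of_nonpos (by positivity) (by linarith) (by linarith)
    _ = 2 ^ a * r ^ (-a) := by
        rw [Real.mul_rpow (by norm_num) hr.le, Real.inv_rpow (by norm_num),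
          Real.rpow_neg (by norm_num), inv_inv]

namespace Zd

variable {d : ℕ}

def supNorm (y : Fin d → ℤ) : ℕ := univ.sup fun i => (y i).natAbs

def bracket (y : Fin d → ℤ) : ℕ := supNorm y + 1

lemma supNorm_le_iff {y : Fin d → ℤ} {K : ℕ} : supNorm y ≤ K ↔ ∀ i, (y i).natAbs ≤ K := by
  simp [supNorm]

lemma natAbs_le_supNorm (y : Fin d → ℤ) (i : Fin d) : (y i).natAbs ≤ supNorm y :=
  supNorm_le_iff.1 le_rfl i

lemma supNorm_add_le (x y : Fin d → ℤ) : supNorm (x + y) ≤ supNorm x + supNorm y :=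
  supNorm_le_iff.2 fun i =>
    (Int.natAbs_add_le _ _).trans (add_le_add (natAbs_le_supNorm x i) (natAbs_le_supNorm y i))

lemma supNorm_neg (y : Fin d → ℤ) : supNorm (-y) = supNorm y := by
  simp [supNorm]

lemma supNorm_sub_comm (x y : Fin d → ℤ) : supNorm (x - y) = supNorm (y - x) := by
  rw [← neg_sub, supNorm_neg]

lemma supNorm_le_sub_add (x y : Fin d → ℤ) : supNorm x ≤ supNorm (x - y) + supNorm y := by
  simpa using supNorm_add_le (x - y) y

lemma bracket_ne_zero (y : Fin d → ℤ) : bracket y ≠ 0 := Nat.succ_ne_zero _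

lemma bracket_pos (y : Fin d → ℤ) : (0 : ℝ) < bracket y := by
  exact_mod_cast Nat.pos_of_ne_zero (bracket_ne_zero y)

noncomputable def box (d K : ℕ) : Finset (Fin d → ℤ) :=
  Fintype.piFinset fun _ => Icc (-(K : ℤ)) K

lemma mem_box {K : ℕ} {y : Fin d → ℤ} : y ∈ box d K ↔ supNorm y ≤ K := by
  simp only [box, Fintype.mem_piFinset, supNorm_le_iff, mem_Icc]
  exact forall_congr' fun i => by omega

lemma card_box (K : ℕ) : #(box d K) = (2 * K + 1) ^ d := by
  have h : ((K : ℤ) + 1 + K).toNat = 2 * K + 1 := by omega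
  simp [box, Int.card_Icc, h]

lemma supNorm_le_znorm (y : Fin d → ℤ) : (supNorm y : ℝ) ≤ znorm y := by
  have hz : 0 ≤ znorm y := Real.sqrt_nonneg _
  refine (Nat.le_floor_iff hz).1 (supNorm_le_iff.2 fun i => (Nat.le_floor_iff hz).2 ?_)
  rw [Nat.cast_natAbs, Int.cast_abs]
  exact Real.abs_le_sqrt (single_le_sum (f := fun i => ((y i : ℝ)) ^ 2)
    (fun i _ => sq_nonneg _) (mem_univ i))

lemma znorm_le_mul_supNorm (y : Fin d → ℤ) : znorm y ≤ d * supNorm y := by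
  have hcoord : ∀ i, ((y i : ℝ)) ^ 2 ≤ (supNorm y : ℝ) ^ 2 := fun i => by
    rw [← sq_abs, ← Int.cast_abs, ← Nat.cast_natAbs]
    exact pow_le_pow_left₀ (by positivity) (by exact_mod_cast natAbs_le_supNorm y i) 2
  have hd : (d : ℝ) ≤ (d : ℝ) ^ 2 := by exact_mod_cast Nat.le_self_pow two_ne_zero d
  refine Real.sqrt_le_iff.2 ⟨by positivity, ?_⟩
  calc ∑ i, ((y i : ℝ)) ^ 2 ≤ ∑ _i : Fin d, (supNorm y : ℝ) ^ 2 :=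
        sum_le_sum fun i _ => hcoord i
    _ = d * (supNorm y : ℝ) ^ 2 := by simp
    _ ≤ (d * supNorm y : ℝ) ^ 2 := by rw [mul_pow]; gcongr

lemma bracket_le_znorm_add_one (y : Fin d → ℤ) : (bracket y : ℝ) ≤ znorm y + 1 := by
  simpa [bracket] using supNorm_le_znorm y

lemma znorm_add_one_le (y : Fin d → ℤ) : znorm y + 1 ≤ (d + 1) * bracket y := by
  have := znorm_le_mul_supNorm y
  simp only [bracket, Nat.cast_add, Nat.cast_one]
  nlinarith [(Nat.cast_nonneg (supNorm y) : (0:ℝ) ≤ _), (Nat.cast_nonneg d : (0:ℝ) ≤ _)]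

lemma rpow_bracket_le {e : ℝ} (he : e ≤ 0) (x : Fin d → ℤ) :
    (bracket x : ℝ) ^ e ≤ ((d : ℝ) + 1) ^ (-e) * (znorm x + 1) ^ e := by
  have h := Real.rpow_le_rpow_of_nonpos (bracket_pos x |>.trans_le (bracket_le_znorm_add_one x))
    (znorm_add_one_le x) he
  rw [Real.mul_rpow (by positivity) (by positivity)] at h
  calc (bracket x : ℝ) ^ e
        = ((d : ℝ) + 1) ^ (-e) * (((d : ℝ) + 1) ^ e * (bracket x : ℝ) ^ e) := by
        rw [← mul_assoc, ← Real.rpow_add (by positivity), neg_add_cancel, Real.rpow_zero, one_mul]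
    _ ≤ _ := by gcongr

lemma card_filter_log_bracket_le (F : Finset (Fin d → ℤ)) (j : ℕ) :
    (#{y ∈ F | Nat.log 2 (bracket y) = j} : ℝ) ≤ 8 ^ d * ((2 : ℝ) ^ j) ^ d := by
  have hsub : {y ∈ F | Nat.log 2 (bracket y) = j} ⊆ box d (2 ^ (j + 1)) := fun y hy => by
    have hlt := Nat.lt_pow_succ_log_self one_lt_two (bracket y)
    rw [(mem_filter.1 hy).2] at hlt
    exact mem_box.2 (by simp only [bracket] at hlt; omega)
  have hcard : #{y ∈ F | Nat.log 2 (bracket y) = j} ≤ (8 * 2 ^ j) ^ d :=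
    calc _ ≤ #(box d (2 ^ (j + 1))) := card_le_card hsub
      _ = (4 * 2 ^ j + 1) ^ d := by rw [card_box, pow_succ]; ring_nf
      _ ≤ (8 * 2 ^ j) ^ d := Nat.pow_le_pow_left (by have := Nat.one_le_two_pow (n := j); omega) d
  rw [← mul_pow]
  exact_mod_cast hcard

lemma sum_filter_log_bracket_rpow_le (F : Finset (Fin d → ℤ)) {s : ℝ} (hs : 0 ≤ s) (j : ℕ) :
    ∑ y ∈ F with Nat.log 2 (bracket y) = j, (bracket y : ℝ) ^ (-s)
      ≤ 8 ^ d * ((2 : ℝ) ^ ((d : ℝ) - s)) ^ j := by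
  have hterm : ∀ y ∈ {y ∈ F | Nat.log 2 (bracket y) = j},
      (bracket y : ℝ) ^ (-s) ≤ ((2 : ℝ) ^ j) ^ (-s) := fun y hy => by
    have hle := Nat.pow_log_le_self 2 (bracket_ne_zero y)
    rw [(mem_filter.1 hy).2] at hle
    exact Real.rpow_le_rpow_of_nonpos (by positivity) (by exact_mod_cast hle) (by linarith)
  calc _ ≤ #{y ∈ F | Nat.log 2 (bracket y) = j} * ((2 : ℝ) ^ j) ^ (-s) := by
        simpa using sum_le_card_nsmul _ _ _ hterm
    _ ≤ 8 ^ d * ((2 : ℝ) ^ j) ^ d * ((2 : ℝ) ^ j) ^ (-s) := by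
        gcongr; exact card_filter_log_bracket_le F j
    _ = 8 ^ d * ((2 : ℝ) ^ ((d : ℝ) - s)) ^ j := by
        rw [mul_assoc, ← Real.rpow_natCast ((2 : ℝ) ^ j) d, ← Real.rpow_add (by positivity),
          ← sub_eq_add_neg, Real.rpow_pow_comm (by norm_num)]

lemma sum_bracket_rpow_le_geom {s : ℝ} (hs : 0 ≤ s) {F : Finset (Fin d → ℤ)} {t : Finset ℕ}
    (ht : ∀ y ∈ F, Nat.log 2 (bracket y) ∈ t) :
    ∑ y ∈ F, (bracket y : ℝ) ^ (-s) ≤ 8 ^ d * ∑ j ∈ t, ((2 : ℝ) ^ ((d : ℝ) - s)) ^ j := by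
  rw [← sum_fiberwise_of_maps_to ht, mul_sum]
  exact sum_le_sum fun j _ => sum_filter_log_bracket_rpow_le F hs j

lemma exists_sum_bracket_rpow_le_of_bracket_le {s : ℝ} (hs : 0 ≤ s) (hsd : s < d) :
    ∃ C > 0, ∀ (K : ℕ) (F : Finset (Fin d → ℤ)), 1 ≤ K → (∀ y ∈ F, bracket y ≤ K) →
      ∑ y ∈ F, (bracket y : ℝ) ^ (-s) ≤ C * (K : ℝ) ^ ((d : ℝ) - s) := by
  set ρ := (2 : ℝ) ^ ((d : ℝ) - s)
  have hρ : 1 < ρ := Real.one_lt_rpow (by norm_num) (by linarith)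
  have hρ1 : 0 < ρ - 1 := sub_pos.2 hρ
  refine ⟨8 ^ d * ρ / (ρ - 1), by positivity, fun K F hK hF => ?_⟩
  set J := Nat.log 2 K
  have hlevels : ∀ y ∈ F, Nat.log 2 (bracket y) ∈ range (J + 1) := fun y hy =>
    mem_range_succ_iff.2 (Nat.log_mono_right (hF y hy))
  have hρJ : ρ ^ J ≤ (K : ℝ) ^ ((d : ℝ) - s) := by
    rw [Real.rpow_pow_comm (by norm_num)]
    exact Real.rpow_le_rpow (by positivity)
      (by exact_mod_cast Nat.pow_log_le_self 2 (by omega)) (by linarith)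
  calc _ ≤ 8 ^ d * ∑ j ∈ range (J + 1), ρ ^ j := sum_bracket_rpow_le_geom hs hlevels
    _ = 8 ^ d * ((ρ ^ (J + 1) - 1) / (ρ - 1)) := by rw [geom_sum_eq hρ.ne']
    _ ≤ 8 ^ d * (ρ ^ (J + 1) / (ρ - 1)) := by gcongr; linarith
    _ = 8 ^ d * ρ / (ρ - 1) * ρ ^ J := by rw [pow_succ]; ring
    _ ≤ _ := by gcongr

lemma exists_sum_bracket_rpow_le_of_le_bracket {t : ℝ} (htd : d < t) :
    ∃ C > 0, ∀ (M : ℕ) (F : Finset (Fin d → ℤ)), 1 ≤ M → (∀ y ∈ F, M ≤ bracket y) →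
      ∑ y ∈ F, (bracket y : ℝ) ^ (-t) ≤ C * (M : ℝ) ^ ((d : ℝ) - t) := by
  set ρ := (2 : ℝ) ^ ((d : ℝ) - t)
  have hρ0 : 0 < ρ := by positivity
  have hρ1 : ρ < 1 := Real.rpow_lt_one_of_one_lt_of_neg (by norm_num) (by linarith)
  have h1ρ : 0 < 1 - ρ := sub_pos.2 hρ1
  refine ⟨8 ^ d * 2 ^ (t - d) / (1 - ρ), by positivity, fun M F hM hF => ?_⟩
  set J₀ := Nat.log 2 M
  have hlevels : ∀ y ∈ F, Nat.log 2 (bracket y) ∈ Ico J₀ (F.sup (Nat.log 2 ∘ bracket) + 1) :=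
    fun y hy => mem_Ico.2 ⟨Nat.log_mono_right (hF y hy),
      Nat.lt_succ_of_le (le_sup (f := Nat.log 2 ∘ bracket) hy)⟩
  have hρJ₀ : ρ ^ J₀ ≤ 2 ^ (t - d) * (M : ℝ) ^ ((d : ℝ) - t) := by
    have hM2 : (M : ℝ) ≤ 2 * 2 ^ J₀ := by
      exact_mod_cast (Nat.lt_pow_succ_log_self one_lt_two M).le.trans_eq (pow_succ' 2 J₀)
    rw [Real.rpow_pow_comm (by norm_num), ← neg_sub]
    exact rpow_neg_le_of_le_two_mul (by exact_mod_cast hM) (by linarith) hM2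
  calc _ ≤ 8 ^ d * ∑ j ∈ Ico J₀ (F.sup (Nat.log 2 ∘ bracket) + 1), ρ ^ j :=
        sum_bracket_rpow_le_geom (by linarith [(Nat.cast_nonneg d : (0 : ℝ) ≤ d)]) hlevels
    _ ≤ 8 ^ d * (ρ ^ J₀ / (1 - ρ)) := by gcongr; exact geom_sum_Ico_le_of_lt_one hρ0.le hρ1
    _ ≤ 8 ^ d * (2 ^ (t - d) * (M : ℝ) ^ ((d : ℝ) - t) / (1 - ρ)) := by gcongr
    _ = _ := by ring

noncomputable def convKernel (a b : ℝ) (x y : Fin d → ℤ) : ℝ :=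
  (bracket (x - y) : ℝ) ^ (-a) * (bracket y : ℝ) ^ (-b)

variable {a b : ℝ}

lemma convKernel_nonneg (x y : Fin d → ℤ) : 0 ≤ convKernel a b x y := by
  unfold convKernel; positivity

lemma exists_sum_convKernel_le_of_near (ha : 0 ≤ a) (had : a < d) (hb : 0 ≤ b) :
    ∃ C > 0, ∀ (x : Fin d → ℤ) (F : Finset (Fin d → ℤ)),
      (∀ y ∈ F, 2 * bracket (x - y) ≤ bracket x) →
      ∑ y ∈ F, convKernel a b x y ≤ C * (bracket x : ℝ) ^ ((d : ℝ) - (a + b)) := by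
  obtain ⟨C, hC, hsum⟩ := exists_sum_bracket_rpow_le_of_bracket_le ha had
  refine ⟨2 ^ b * C, by positivity, fun x F hF => ?_⟩
  set R : ℝ := (bracket x : ℝ) with hRx
  have hR : 0 < R := bracket_pos x
  have hterm : ∀ y ∈ F,
      convKernel a b x y ≤ 2 ^ b * R ^ (-b) * (bracket (x - y) : ℝ) ^ (-a) := fun y hy => by
    have hxy : bracket x ≤ 2 * bracket y := by
      have := supNorm_le_sub_add x y; have := hF y hy; simp only [bracket] at *; omega
    rw [convKernel, mul_comm]
    gcongr
    exact rpow_neg_le_of_le_two_mul hR hb (by rw [hRx]; exact_mod_cast hxy)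
  have hshift : ∑ y ∈ F, (bracket (x - y) : ℝ) ^ (-a) ≤ C * R ^ ((d : ℝ) - a) := by
    rw [← sum_image (f := fun z => (bracket z : ℝ) ^ (-a))
      fun y _ z _ h => sub_right_injective h]
    refine hsum _ _ (Nat.one_le_iff_ne_zero.2 (bracket_ne_zero x)) ?_
    simp only [mem_image, forall_exists_index, and_imp, forall_apply_eq_imp_iff₂]
    exact fun y hy => by have := hF y hy; omega
  calc ∑ y ∈ F, convKernel a b x y
      ≤ ∑ y ∈ F, 2 ^ b * R ^ (-b) * (bracket (x - y) : ℝ) ^ (-a) := sum_le_sum hterm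
    _ = 2 ^ b * R ^ (-b) * ∑ y ∈ F, (bracket (x - y) : ℝ) ^ (-a) := (mul_sum _ _ _).symm
    _ ≤ 2 ^ b * R ^ (-b) * (C * R ^ ((d : ℝ) - a)) := by gcongr
    _ = 2 ^ b * C * R ^ ((d : ℝ) - (a + b)) := by
        rw [show (d : ℝ) - (a + b) = -b + ((d : ℝ) - a) by ring, Real.rpow_add hR]
        ring

lemma exists_sum_convKernel_le_of_middle (ha : 0 ≤ a) (hb : 0 ≤ b) (hbd : b < d) :
    ∃ C > 0, ∀ (x : Fin d → ℤ) (F : Finset (Fin d → ℤ)),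
      (∀ y ∈ F, bracket x ≤ 2 * bracket (x - y) ∧ bracket y ≤ 2 * bracket x) →
      ∑ y ∈ F, convKernel a b x y ≤ C * (bracket x : ℝ) ^ ((d : ℝ) - (a + b)) := by
  obtain ⟨C, hC, hsum⟩ := exists_sum_bracket_rpow_le_of_bracket_le hb hbd
  refine ⟨2 ^ a * C * 2 ^ ((d : ℝ) - b), by positivity, fun x F hF => ?_⟩
  set R : ℝ := (bracket x : ℝ) with hRx
  have hR : 0 < R := bracket_pos x
  have hterm : ∀ y ∈ F, convKernel a b x y ≤ 2 ^ a * R ^ (-a) * (bracket y : ℝ) ^ (-b) :=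
    fun y hy => by
      rw [convKernel]
      gcongr
      exact rpow_neg_le_of_le_two_mul hR ha (by rw [hRx]; exact_mod_cast (hF y hy).1)
  have hbox : ∑ y ∈ F, (bracket y : ℝ) ^ (-b) ≤ C * (2 * R) ^ ((d : ℝ) - b) := by
    have := hsum (2 * bracket x) F (by have := bracket_ne_zero x; omega) fun y hy => (hF y hy).2
    simpa [R] using this
  calc ∑ y ∈ F, convKernel a b x y
      ≤ ∑ y ∈ F, 2 ^ a * R ^ (-a) * (bracket y : ℝ) ^ (-b) := sum_le_sum hterm
    _ = 2 ^ a * R ^ (-a) * ∑ y ∈ F, (bracket y : ℝ) ^ (-b) := (mul_sum _ _ _).symm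
    _ ≤ 2 ^ a * R ^ (-a) * (C * (2 * R) ^ ((d : ℝ) - b)) := by gcongr
    _ = 2 ^ a * C * 2 ^ ((d : ℝ) - b) * R ^ ((d : ℝ) - (a + b)) := by
        rw [Real.mul_rpow (by norm_num) hR.le,
          show (d : ℝ) - (a + b) = -a + ((d : ℝ) - b) by ring, Real.rpow_add hR]
        ring

lemma exists_sum_convKernel_le_of_far (ha : 0 ≤ a) (habd : d < a + b) :
    ∃ C > 0, ∀ (x : Fin d → ℤ) (F : Finset (Fin d → ℤ)),
      (∀ y ∈ F, 2 * bracket x < bracket y) →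
      ∑ y ∈ F, convKernel a b x y ≤ C * (bracket x : ℝ) ^ ((d : ℝ) - (a + b)) := by
  obtain ⟨C, hC, hsum⟩ := exists_sum_bracket_rpow_le_of_le_bracket habd
  refine ⟨2 ^ a * C, by positivity, fun x F hF => ?_⟩
  have hterm : ∀ y ∈ F, convKernel a b x y ≤ 2 ^ a * (bracket y : ℝ) ^ (-(a + b)) :=
    fun y hy => by
      have hy : bracket y ≤ 2 * bracket (x - y) := by
        have := supNorm_le_sub_add y x; have := hF y hy
        rw [supNorm_sub_comm] at *; simp only [bracket] at *; omega
      calc convKernel a b x y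
          ≤ 2 ^ a * (bracket y : ℝ) ^ (-a) * (bracket y : ℝ) ^ (-b) := by
            rw [convKernel]
            gcongr
            exact rpow_neg_le_of_le_two_mul (bracket_pos y) ha (by exact_mod_cast hy)
        _ = 2 ^ a * (bracket y : ℝ) ^ (-(a + b)) := by
            rw [mul_assoc, ← Real.rpow_add (bracket_pos y), neg_add]
  calc ∑ y ∈ F, convKernel a b x y
      ≤ ∑ y ∈ F, 2 ^ a * (bracket y : ℝ) ^ (-(a + b)) := sum_le_sum hterm
    _ = 2 ^ a * ∑ y ∈ F, (bracket y : ℝ) ^ (-(a + b)) := (mul_sum _ _ _).symm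
    _ ≤ 2 ^ a * (C * (bracket x : ℝ) ^ ((d : ℝ) - (a + b))) := by
        gcongr
        exact hsum _ F (Nat.one_le_iff_ne_zero.2 (bracket_ne_zero x))
          fun y hy => (hF y hy).le.trans' (by omega)
    _ = 2 ^ a * C * (bracket x : ℝ) ^ ((d : ℝ) - (a + b)) := by ring

lemma exists_sum_convKernel_le (ha : 0 ≤ a) (hb : 0 ≤ b) (had : a < d) (hbd : b < d)
    (habd : d < a + b) :
    ∃ C > 0, ∀ (x : Fin d → ℤ) (F : Finset (Fin d → ℤ)),
      ∑ y ∈ F, convKernel a b x y ≤ C * (bracket x : ℝ) ^ ((d : ℝ) - (a + b)) := by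
  obtain ⟨C₁, hC₁, hnear⟩ := exists_sum_convKernel_le_of_near ha had hb
  obtain ⟨C₂, hC₂, hmiddle⟩ := exists_sum_convKernel_le_of_middle ha hb hbd
  obtain ⟨C₃, hC₃, hfar⟩ := exists_sum_convKernel_le_of_far ha habd
  refine ⟨C₁ + C₂ + C₃, by positivity, fun x F => ?_⟩
  set F' := {y ∈ F | ¬2 * bracket (x - y) ≤ bracket x}
  rw [← sum_filter_add_sum_filter_not F fun y => 2 * bracket (x - y) ≤ bracket x,
    ← sum_filter_add_sum_filter_not F' fun y => 2 * bracket x < bracket y]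
  have h₁ := hnear x {y ∈ F | 2 * bracket (x - y) ≤ bracket x} fun y hy => (mem_filter.1 hy).2
  have h₂ := hmiddle x {y ∈ F' | ¬2 * bracket x < bracket y}
    fun y hy => by simp only [F', mem_filter] at hy; omega
  have h₃ := hfar x {y ∈ F' | 2 * bracket x < bracket y} fun y hy => (mem_filter.1 hy).2
  rw [add_mul, add_mul]
  linarith

end Zd

open Zd in
theorem stmt2_general (d : ℕ) (a b : ℝ) (hb : 0 < b) (hba : b ≤ a)
    (had : a < (d : ℝ)) (habd : (d : ℝ) < a + b) :
    ∃ C : ℝ, 0 < C ∧ ∀ f g : (Fin d → ℤ) → ℝ,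
      (∀ x, |f x| ≤ (znorm x + 1) ^ (-a)) →
      (∀ x, |g x| ≤ (znorm x + 1) ^ (-b)) →
      ∀ x : Fin d → ℤ,
        |∑' y : Fin d → ℤ, f (x - y) * g y| ≤ C * (znorm x + 1) ^ ((d : ℝ) - (a + b)) := by
  have ha : 0 ≤ a := hb.le.trans hba
  obtain ⟨C, hC, hsum⟩ := exists_sum_convKernel_le ha hb.le had (hba.trans_lt had) habd
  refine ⟨C * ((d : ℝ) + 1) ^ (a + b - d), by positivity, fun f g hf hg x => ?_⟩
  have hweight {s : ℝ} (hs : 0 ≤ s) (z : Fin d → ℤ) :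
      (znorm z + 1) ^ (-s) ≤ (bracket z : ℝ) ^ (-s) :=
    Real.rpow_le_rpow_of_nonpos (bracket_pos z) (bracket_le_znorm_add_one z) (by linarith)
  have hterm : ∀ y, ‖f (x - y) * g y‖ ≤ convKernel a b x y := fun y => by
    rw [Real.norm_eq_abs, abs_mul, convKernel]
    exact mul_le_mul ((hf _).trans (hweight ha _)) ((hg y).trans (hweight hb.le y))
      (abs_nonneg _) (by positivity)
  have hsummable : Summable (convKernel a b x) := summable_of_sum_le (convKernel_nonneg x) (hsum x)
  calc |∑' y, f (x - y) * g y| ≤ ∑' y, convKernel a b x y :=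
        tsum_of_norm_bounded hsummable.hasSum hterm
    _ ≤ C * (bracket x : ℝ) ^ ((d : ℝ) - (a + b)) := hsummable.tsum_le_of_sum_le (hsum x)
    _ ≤ C * (((d : ℝ) + 1) ^ (-((d : ℝ) - (a + b))) * (znorm x + 1) ^ ((d : ℝ) - (a + b))) := by
        gcongr; exact rpow_bracket_le (by linarith) x
    _ = _ := by rw [neg_sub]; ring

theorem stmt2 (d : ℕ) (hd : 1 ≤ d) (a b : ℝ) (hb : 0 < b) (hba : b ≤ a)
    (had : a < (d : ℝ)) (habd : (d : ℝ) < a + b) :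
    ∃ C : ℝ, 0 < C ∧ ∀ f g : (Fin d → ℤ) → ℝ,
      (∀ x, |f x| ≤ (znorm x + 1) ^ (-a)) →
      (∀ x, |g x| ≤ (znorm x + 1) ^ (-b)) →
      ∀ x : Fin d → ℤ,
        |∑' y : Fin d → ℤ, f (x - y) * g y| ≤ C * (znorm x + 1) ^ ((d : ℝ) - (a + b)) :=
  stmt2_general d a b hb hba had habd
end

section
/- Let d > 2, s > 0, and set s₂ = min(s,2). Let A, B, C > 0 and let f, g : ℤ^d → ℝ, where g is ℤ^d-symmetric. Suppose that |f(x) − A(|x|+1)^{−(d−2)}| ≤ B(|x|+1)^{−(d−2+s)} and |g(x)| ≤ C(|x|+1)^{−(d+s)} for all x ∈ ℤ^d. Then there is a constant c depending only on d and s such that for all x ∈ ℤ^d: if s ≠ 2 then |(f*g)(x) − (∑_{y∈ℤ^d} g(y))·A(|x|+1)^{−(d−2)}| ≤ cC(A+B)(|x|+1)^{−(d−2+s₂)}, and if s = 2 then |(f*g)(x) − (∑_{y∈ℤ^d} g(y))·A(|x|+1)^{−(d−2)}| ≤ cC(A+B) log(|x|+2)·(|x|+1)^{−d}. -/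
open scoped BigOperators

/-- A function on `ℤ^d` is `ℤ^d`-symmetric if it is invariant under permutations of the
coordinates and sign changes of individual coordinates of its argument. -/
def ZdSymm {d : ℕ} (f : (Fin d → ℤ) → ℝ) : Prop :=
  ∀ (σ : Equiv.Perm (Fin d)) (e : Fin d → Bool) (x : Fin d → ℤ),
    f (fun i => if e i then -(x (σ i)) else x (σ i)) = f x

open Finset

namespace Stmt3Aux
variable {d : ℕ}

lemma znorm_nonneg (x : Fin d → ℤ) : 0 ≤ znorm x := Real.sqrt_nonneg _

lemma znorm_sq (x : Fin d → ℤ) : znorm x ^ 2 = ∑ i, ((x i : ℝ)) ^ 2 :=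
  Real.sq_sqrt (by positivity)

lemma abs_coord_le (x : Fin d → ℤ) (i : Fin d) : |((x i : ℝ))| ≤ znorm x := by
  rw [znorm, ← Real.sqrt_sq_eq_abs]
  exact Real.sqrt_le_sqrt (Finset.single_le_sum (f := fun i => ((x i : ℝ)) ^ 2)
    (fun i _ => by positivity) (mem_univ i))

noncomputable def ev (x : Fin d → ℤ) : EuclideanSpace ℝ (Fin d) := WithLp.toLp 2 (fun i => (x i : ℝ))

lemma znorm_eq (x : Fin d → ℤ) : znorm x = ‖ev x‖ := by
  rw [EuclideanSpace.norm_eq]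
  unfold znorm ev
  congr 1
  exact Finset.sum_congr rfl (fun i _ => by rw [PiLp.toLp_apply, Real.norm_eq_abs, sq_abs])

lemma ev_sub (x y : Fin d → ℤ) : ev (x - y) = ev x - ev y := by
  ext i; simp [ev]

lemma ev_add (x y : Fin d → ℤ) : ev (x + y) = ev x + ev y := by
  ext i; simp [ev]

lemma znorm_neg (x : Fin d → ℤ) : znorm (-x) = znorm x := by
  unfold znorm; congr 1
  refine Finset.sum_congr rfl (fun i _ => ?_)
  rw [Pi.neg_apply]; push_cast; ring

lemma znorm_sub_znorm_le (x y : Fin d → ℤ) : znorm x - znorm y ≤ znorm (x - y) := by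
  rw [znorm_eq, znorm_eq, znorm_eq, ev_sub]
  have := norm_sub_norm_le (ev x) (ev y)
  linarith [this]

lemma abs_znorm_sub_le (x y : Fin d → ℤ) : |znorm (x - y) - znorm x| ≤ znorm y := by
  rw [znorm_eq, znorm_eq, znorm_eq, ev_sub]
  have h := abs_norm_sub_norm_le (ev x - ev y) (ev x)
  simpa using h

lemma abs_znorm_add_le (x y : Fin d → ℤ) : |znorm (x + y) - znorm x| ≤ znorm y := by
  rw [znorm_eq, znorm_eq, znorm_eq, ev_add]
  have h := abs_norm_sub_norm_le (ev x + ev y) (ev x)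
  simpa using h

lemma znorm_parallelogram (x y : Fin d → ℤ) :
    znorm (x - y) ^ 2 + znorm (x + y) ^ 2 = 2 * znorm x ^ 2 + 2 * znorm y ^ 2 := by
  rw [znorm_sq, znorm_sq, znorm_sq, znorm_sq, ← Finset.sum_add_distrib, Finset.mul_sum,
    Finset.mul_sum, ← Finset.sum_add_distrib]
  refine Finset.sum_congr rfl (fun i _ => ?_)
  simp only [Pi.sub_apply, Pi.add_apply]
  push_cast; ring

lemma one_le_znorm {x : Fin d → ℤ} (hx : x ≠ 0) : 1 ≤ znorm x := by
  obtain ⟨i, hi⟩ : ∃ i, x i ≠ 0 := by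
    by_contra h; push_neg at h; exact hx (funext h)
  have h1 : (1 : ℝ) ≤ |((x i : ℝ))| := by
    have : (1 : ℤ) ≤ |x i| := Int.one_le_abs hi
    calc (1:ℝ) ≤ (|x i| : ℤ) := by exact_mod_cast this
    _ = |((x i : ℝ))| := by push_cast; ring
  exact h1.trans (abs_coord_le x i)

/-- The lattice cube of radius `m`. -/
noncomputable def ballF (d m : ℕ) : Finset (Fin d → ℤ) :=
  Finset.Icc (fun _ => -(m : ℤ)) (fun _ => (m : ℤ))

lemma mem_ballF {m : ℕ} {y : Fin d → ℤ} (h : znorm y ≤ m) : y ∈ ballF d m := by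
  rw [ballF, Finset.mem_Icc]
  constructor <;> (intro i) <;>
  · have h1 : |((y i : ℝ))| ≤ (m : ℝ) := (abs_coord_le y i).trans h
    have h2 : |y i| ≤ (m : ℤ) := by exact_mod_cast (by rwa [← Int.cast_abs] at h1 : ((|y i| : ℤ) : ℝ) ≤ (m:ℝ))
    have := abs_le.mp h2
    first
      | exact this.1
      | exact this.2

lemma card_ballF (m : ℕ) : (ballF d m).card = (2 * m + 1) ^ d := by
  rw [ballF, Pi.card_Icc]
  have : ∀ i : Fin d, (Finset.Icc (-(m:ℤ)) (m:ℤ)).card = 2 * m + 1 := by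
    intro i
    rw [Int.card_Icc]
    omega
  rw [Finset.prod_congr rfl (fun i _ => this i), Finset.prod_const, Finset.card_univ,
    Fintype.card_fin]

end Stmt3Aux
namespace Stmt3Aux
variable {d : ℕ}

/-- Dyadic scale of a lattice point. -/
noncomputable def psi (y : Fin d → ℤ) : ℕ := Nat.log 2 ⌊znorm y + 1⌋₊

lemma floor_w_pos (y : Fin d → ℤ) : 1 ≤ ⌊znorm y + 1⌋₊ :=
  Nat.le_floor (by simpa using znorm_nonneg y)

lemma psi_le (y : Fin d → ℤ) : (2 : ℝ) ^ psi y ≤ znorm y + 1 := by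
  have h1 : (2 : ℕ) ^ psi y ≤ ⌊znorm y + 1⌋₊ :=
    Nat.pow_log_le_self 2 (by have := floor_w_pos y; omega)
  calc (2:ℝ) ^ psi y = ((2^ psi y : ℕ) : ℝ) := by push_cast; ring
    _ ≤ (⌊znorm y + 1⌋₊ : ℝ) := by exact_mod_cast h1
    _ ≤ znorm y + 1 := Nat.floor_le (by have := znorm_nonneg y; linarith)

lemma psi_gt (y : Fin d → ℤ) : znorm y + 1 < (2 : ℝ) ^ (psi y + 1) := by
  have h1 : ⌊znorm y + 1⌋₊ < 2 ^ (psi y + 1) := Nat.lt_pow_succ_log_self (by norm_num) _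
  have h2 : znorm y + 1 < (⌊znorm y + 1⌋₊ : ℝ) + 1 :=
    Nat.lt_floor_add_one _
  have h3 : (⌊znorm y + 1⌋₊ : ℝ) + 1 ≤ ((2 ^ (psi y + 1) : ℕ) : ℝ) := by
    exact_mod_cast h1
  calc znorm y + 1 < (⌊znorm y + 1⌋₊ : ℝ) + 1 := h2
    _ ≤ ((2 ^ (psi y + 1) : ℕ) : ℝ) := h3
    _ = (2:ℝ) ^ (psi y + 1) := by push_cast; ring

lemma fiber_subset (k : ℕ) (t : Finset (Fin d → ℤ)) :
    t.filter (fun y => psi y = k) ⊆ ballF d (2 ^ (k + 1)) := by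
  intro y hy
  rw [Finset.mem_filter] at hy
  apply mem_ballF
  have h := psi_gt y
  rw [hy.2] at h
  have : (2:ℝ) ^ (k+1) = ((2 ^ (k + 1) : ℕ) : ℝ) := by push_cast; ring
  rw [this] at h
  linarith

lemma fiber_card (k : ℕ) (t : Finset (Fin d → ℤ)) :
    ((t.filter (fun y => psi y = k)).card : ℝ) ≤ (2:ℝ) ^ (3 * d) * ((2:ℝ) ^ k) ^ d := by
  have h1 : (t.filter (fun y => psi y = k)).card ≤ (2 * 2 ^ (k+1) + 1) ^ d := by
    rw [← card_ballF (d := d)]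
    exact Finset.card_le_card (fiber_subset k t)
  have h2 : ((2 * 2 ^ (k+1) + 1 : ℕ) : ℝ) ≤ (2:ℝ)^(k+3) := by
    push_cast
    have : (2:ℝ)^(k+3) = 8 * 2^k := by ring
    rw [this]
    have h3 : (1:ℝ) ≤ 2^k := one_le_pow₀ (by norm_num)
    have h4 : (2:ℝ)^(k+1) = 2 * 2^k := by ring
    nlinarith
  calc ((t.filter (fun y => psi y = k)).card : ℝ) ≤ ((2 * 2 ^ (k+1) + 1 : ℕ) : ℝ)^d := by
        exact_mod_cast h1
    _ ≤ ((2:ℝ)^(k+3))^d := by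
        apply pow_le_pow_left₀ (by positivity) h2
    _ = (2:ℝ)^(3*d) * ((2:ℝ)^k)^d := by rw [← pow_mul, ← pow_mul, ← pow_add]; ring_nf

/-- Core dyadic-decomposition bound for sums of `(znorm y + 1) ^ (-e)`. -/
lemma key_count (e : ℝ) (he : 0 ≤ e) (t : Finset (Fin d → ℤ)) :
    ∑ y ∈ t, (znorm y + 1) ^ (-e) ≤
      (2:ℝ) ^ (3 * d) * ∑ k ∈ t.image psi, ((2:ℝ) ^ ((d : ℝ) - e)) ^ k := by
  classical
  rw [← Finset.sum_fiberwise_of_maps_to (g := psi) (t := t.image psi)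
    (fun y hy => Finset.mem_image_of_mem psi hy) (fun y => (znorm y + 1) ^ (-e)),
    Finset.mul_sum]
  apply Finset.sum_le_sum
  intro k _
  have hterm : ∀ y ∈ t.filter (fun y => psi y = k),
      (znorm y + 1) ^ (-e) ≤ ((2:ℝ) ^ k) ^ (-e : ℝ) := by
    intro y hy
    rw [Finset.mem_filter] at hy
    have h2k : (2:ℝ) ^ k ≤ znorm y + 1 := by rw [← hy.2]; exact psi_le y
    exact Real.rpow_le_rpow_of_nonpos (by positivity) h2k (by linarith)
  calc ∑ y ∈ t.filter (fun y => psi y = k), (znorm y + 1) ^ (-e)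
      ≤ ((t.filter (fun y => psi y = k)).card : ℝ) * ((2:ℝ) ^ k) ^ (-e : ℝ) := by
        rw [← nsmul_eq_mul]
        exact Finset.sum_le_card_nsmul _ _ _ hterm
    _ ≤ (2:ℝ) ^ (3 * d) * ((2:ℝ) ^ k) ^ (d : ℕ) * ((2:ℝ) ^ k) ^ (-e : ℝ) := by
        apply mul_le_mul_of_nonneg_right (fiber_card k t) (by positivity)
    _ = (2:ℝ) ^ (3 * d) * (((2:ℝ) ^ k) ^ ((d:ℝ) - e)) := by
        rw [mul_assoc]
        congr 1
        rw [← Real.rpow_natCast ((2:ℝ)^k) d, ← Real.rpow_add (by positivity),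
          show (d:ℝ) + -e = (d:ℝ) - e by ring]
    _ = (2:ℝ) ^ (3 * d) * ((2:ℝ) ^ ((d : ℝ) - e)) ^ k := by
        congr 1
        rw [← Real.rpow_natCast ((2:ℝ)) k, ← Real.rpow_mul (by norm_num : (0:ℝ) ≤ 2),
          ← Real.rpow_natCast ((2:ℝ) ^ ((d:ℝ) - e)) k,
          ← Real.rpow_mul (by norm_num : (0:ℝ) ≤ 2), mul_comm]

end Stmt3Aux
namespace Stmt3Aux
variable {d : ℕ}

lemma geom_finset_le {r : ℝ} (h0 : 0 ≤ r) (h1 : r < 1) (u : Finset ℕ) :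
    ∑ k ∈ u, r ^ k ≤ (1 - r)⁻¹ := by
  classical
  obtain ⟨n, hn⟩ : ∃ n, u ⊆ Finset.range n := ⟨(u.sup id) + 1, fun k hk =>
    Finset.mem_range.mpr (Nat.lt_succ_of_le (Finset.le_sup (f := id) hk))⟩
  calc ∑ k ∈ u, r ^ k ≤ ∑ k ∈ Finset.range n, r ^ k :=
        Finset.sum_le_sum_of_subset_of_nonneg hn (fun k _ _ => by positivity)
    _ ≤ (1 - r)⁻¹ := by
        rw [geom_sum_eq (by linarith)]
        have hpos : (0:ℝ) < (1 - r) := by linarith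
        rw [show (r ^ n - 1) / (r - 1) = (1 - r^n) * (1-r)⁻¹ by
          rw [div_eq_mul_inv, show (r ^ n - 1) = -(1 - r^n) by ring,
            show (r - 1) = -(1-r) by ring, ← neg_inv, neg_mul_neg]]
        have hrn : 0 ≤ r ^ n := by positivity
        nth_rewrite 2 [← one_mul (1-r)⁻¹]
        apply mul_le_mul_of_nonneg_right (by linarith) (inv_nonneg.mpr hpos.le)

lemma geom_finset_tail_le {r : ℝ} (h0 : 0 ≤ r) (h1 : r < 1) (k₀ : ℕ) (u : Finset ℕ)
    (hu : ∀ k ∈ u, k₀ ≤ k) :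
    ∑ k ∈ u, r ^ k ≤ r ^ k₀ * (1 - r)⁻¹ := by
  classical
  have step : ∑ k ∈ u, r ^ k = r ^ k₀ * ∑ k ∈ u, r ^ (k - k₀) := by
    rw [Finset.mul_sum]
    refine Finset.sum_congr rfl (fun k hk => ?_)
    rw [← pow_add]
    congr 1
    have := hu k hk
    omega
  rw [step]
  apply mul_le_mul_of_nonneg_left _ (by positivity)
  have himg : ∑ k ∈ u, r ^ (k - k₀) = ∑ j ∈ u.image (· - k₀), r ^ j := by
    rw [Finset.sum_image]
    intro a ha b hb hab
    have ha' := hu a ha; have hb' := hu b hb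
    simp only at hab
    omega
  rw [himg]
  exact geom_finset_le h0 h1 _

lemma geom_finset_grow_le {ρ V : ℝ} (h1 : 1 < ρ) (hV : 0 ≤ V) (u : Finset ℕ)
    (hu : ∀ k ∈ u, ρ ^ k ≤ V) :
    ∑ k ∈ u, ρ ^ k ≤ ρ * V * (ρ - 1)⁻¹ := by
  classical
  have hρ1 : (0:ℝ) < ρ - 1 := by linarith
  rcases u.eq_empty_or_nonempty with rfl | hne
  · simp
    exact mul_nonneg (mul_nonneg (by linarith) hV) (inv_nonneg.mpr hρ1.le)
  · set n := u.max' hne with hn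
    have hsub : u ⊆ Finset.range (n + 1) := fun k hk =>
      Finset.mem_range.mpr (Nat.lt_succ_of_le (Finset.le_max' u k hk))
    have hρ0 : (0:ℝ) ≤ ρ := by linarith
    calc ∑ k ∈ u, ρ ^ k ≤ ∑ k ∈ Finset.range (n+1), ρ ^ k :=
          Finset.sum_le_sum_of_subset_of_nonneg hsub (fun k _ _ => by positivity)
      _ = (ρ ^ (n+1) - 1) / (ρ - 1) := geom_sum_eq (by linarith) _
      _ ≤ ρ ^ (n+1) * (ρ - 1)⁻¹ := by
          rw [div_eq_mul_inv]
          apply mul_le_mul_of_nonneg_right (by linarith) (inv_nonneg.mpr hρ1.le)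
      _ = ρ * ρ ^ n * (ρ - 1)⁻¹ := by ring
      _ ≤ ρ * V * (ρ - 1)⁻¹ := by
          have : ρ ^ n ≤ V := hu n (u.max'_mem hne)
          have h2 : (0:ℝ) ≤ (ρ - 1)⁻¹ := inv_nonneg.mpr hρ1.le
          apply mul_le_mul_of_nonneg_right _ h2
          apply mul_le_mul_of_nonneg_left this (by linarith)

lemma count_finset_le {k₁ : ℕ} (u : Finset ℕ) (hu : ∀ k ∈ u, k ≤ k₁) :
    (u.card : ℝ) ≤ (k₁ : ℝ) + 1 := by
  have : u ⊆ Finset.range (k₁ + 1) := fun k hk => Finset.mem_range.mpr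
    (Nat.lt_succ_of_le (hu k hk))
  have := Finset.card_le_card this
  rw [Finset.card_range] at this
  exact_mod_cast this

/-- Full-space sum, exponent `e > d`. -/
lemma sum_full (e : ℝ) (he : (d:ℝ) < e) (t : Finset (Fin d → ℤ)) :
    ∑ y ∈ t, (znorm y + 1) ^ (-e) ≤
      (2:ℝ) ^ (3 * d) * (1 - (2:ℝ) ^ ((d:ℝ) - e))⁻¹ := by
  have he0 : 0 ≤ e := le_trans (Nat.cast_nonneg d) he.le
  have hr0 : (0:ℝ) ≤ (2:ℝ) ^ ((d:ℝ) - e) := Real.rpow_nonneg (by norm_num) _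
  have hr1 : (2:ℝ) ^ ((d:ℝ) - e) < 1 :=
    Real.rpow_lt_one_of_one_lt_of_neg (by norm_num) (by linarith)
  calc ∑ y ∈ t, (znorm y + 1) ^ (-e)
      ≤ (2:ℝ) ^ (3 * d) * ∑ k ∈ t.image psi, ((2:ℝ) ^ ((d : ℝ) - e)) ^ k :=
        key_count e he0 t
    _ ≤ (2:ℝ) ^ (3 * d) * (1 - (2:ℝ) ^ ((d:ℝ) - e))⁻¹ := by
        apply mul_le_mul_of_nonneg_left (geom_finset_le hr0 hr1 _) (by positivity)

end Stmt3Aux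
namespace Stmt3Aux
variable {d : ℕ}

lemma rpow_neg_antitone {u v e : ℝ} (hu : 0 < u) (huv : u ≤ v) (he : 0 ≤ e) :
    v ^ (-e) ≤ u ^ (-e) :=
  Real.rpow_le_rpow_of_nonpos hu huv (by linarith)

/-- `u ≥ v / K` implies `u^(-e) ≤ K^e * v^(-e)`. -/
lemma rpow_neg_scale {u v K e : ℝ} (hv : 0 < v) (hK : 0 < K) (he : 0 ≤ e)
    (huv : v / K ≤ u) : u ^ (-e) ≤ K ^ e * v ^ (-e) := by
  have h1 : u ^ (-e) ≤ (v / K) ^ (-e) :=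
    rpow_neg_antitone (div_pos hv hK) huv he
  have h2 : (v / K) ^ (-e) = K ^ e * v ^ (-e) := by
    rw [Real.div_rpow hv.le hK.le, Real.rpow_neg hv.le, Real.rpow_neg hK.le]
    field_simp
  rw [h2] at h1; exact h1

/-- Tail sum, exponent `d + a`, over points with `znorm y > Q`. -/
lemma sum_tail (a : ℝ) (ha : 0 < a) (Q : ℝ) (hQ : 0 ≤ Q) (t : Finset (Fin d → ℤ))
    (ht : ∀ y ∈ t, Q < znorm y) :
    ∑ y ∈ t, (znorm y + 1) ^ (-((d:ℝ) + a)) ≤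
      (2:ℝ) ^ (3 * d) * (1 - (2:ℝ) ^ (-a))⁻¹ * ((4:ℝ) ^ a * (Q + 1) ^ (-a)) := by
  have hr0 : (0:ℝ) ≤ (2:ℝ) ^ (-a) := Real.rpow_nonneg (by norm_num) _
  have hr1 : (2:ℝ) ^ (-a) < 1 :=
    Real.rpow_lt_one_of_one_lt_of_neg (by norm_num) (by linarith)
  have hinv : (0:ℝ) ≤ (1 - (2:ℝ) ^ (-a))⁻¹ := inv_nonneg.mpr (by linarith)
  have hde : (d:ℝ) - ((d:ℝ) + a) = -a := by ring
  have key := key_count ((d:ℝ) + a) (by positivity) t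
  rw [hde] at key
  rcases le_or_gt 1 Q with hQ1 | hQ1
  · -- Q ≥ 1 : genuine tail estimate
    set k₀ := Nat.log 2 ⌊Q + 1⌋₊ with hk₀
    have hm1 : 1 ≤ ⌊Q + 1⌋₊ := Nat.le_floor (by push_cast; linarith)
    have hklb : ∀ k ∈ t.image psi, k₀ ≤ k := by
      intro k hk
      obtain ⟨y, hy, rfl⟩ := Finset.mem_image.mp hk
      have hwy : Q + 1 < (2:ℝ) ^ (psi y + 1) := lt_of_le_of_lt (by linarith [ht y hy]) (psi_gt y)
      have hfl : (⌊Q + 1⌋₊ : ℝ) ≤ Q + 1 := Nat.floor_le (by linarith)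
      have : (⌊Q+1⌋₊ : ℝ) < ((2 ^ (psi y + 1) : ℕ) : ℝ) := by push_cast; linarith
      have hnat : ⌊Q+1⌋₊ < 2 ^ (psi y + 1) := by exact_mod_cast this
      have := Nat.log_lt_of_lt_pow (by omega) hnat
      omega
    have htail := geom_finset_tail_le hr0 hr1 k₀ _ hklb
    have hk₀lb : Q / 2 < (2:ℝ) ^ k₀ := by
      have h1 : ⌊Q+1⌋₊ < 2 ^ (k₀ + 1) := Nat.lt_pow_succ_log_self (by norm_num) _
      have h2 : Q < (⌊Q+1⌋₊ : ℝ) + 1 - 1 + 1 := by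
        have := Nat.lt_floor_add_one (Q+1); linarith [this]
      have h3 : ((⌊Q+1⌋₊ : ℕ) : ℝ) ≤ ((2 ^ (k₀+1) : ℕ) : ℝ) - 1 := by
        have : ⌊Q+1⌋₊ + 1 ≤ 2 ^ (k₀+1) := by omega
        push_cast
        have : ((⌊Q+1⌋₊ : ℕ) : ℝ) + 1 ≤ ((2 ^ (k₀+1) : ℕ) : ℝ) := by exact_mod_cast this
        push_cast at this
        linarith
      have h4 : Q < (2:ℝ) ^ (k₀ + 1) := by
        have : ((2 ^ (k₀+1) : ℕ) : ℝ) = (2:ℝ) ^ (k₀+1) := by push_cast; ring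
        nlinarith [h2, h3, this]
      have : (2:ℝ) ^ (k₀+1) = 2 * 2 ^ k₀ := by ring
      linarith [h4, this]
    have hrk₀ : ((2:ℝ) ^ (-a)) ^ k₀ ≤ (4:ℝ) ^ a * (Q + 1) ^ (-a) := by
      have hQ4 : (Q + 1) / 4 ≤ (2:ℝ) ^ k₀ := by
        have : (Q + 1) / 4 ≤ Q / 2 := by linarith
        linarith [hk₀lb]
      have := rpow_neg_scale (v := Q + 1) (K := 4) (e := a)
        (by linarith) (by norm_num) ha.le hQ4
      calc ((2:ℝ) ^ (-a)) ^ k₀ = ((2:ℝ) ^ k₀ : ℝ) ^ (-a) := by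
            rw [← Real.rpow_natCast ((2:ℝ)^(-a)) k₀, ← Real.rpow_mul (by norm_num),
              ← Real.rpow_natCast (2:ℝ) k₀, ← Real.rpow_mul (by norm_num), mul_comm]
        _ ≤ (4:ℝ) ^ a * (Q + 1) ^ (-a) := this
    calc ∑ y ∈ t, (znorm y + 1) ^ (-((d:ℝ) + a))
        ≤ (2:ℝ) ^ (3*d) * ∑ k ∈ t.image psi, ((2:ℝ) ^ (-a)) ^ k := key
      _ ≤ (2:ℝ) ^ (3*d) * (((2:ℝ) ^ (-a)) ^ k₀ * (1 - (2:ℝ)^(-a))⁻¹) :=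
          mul_le_mul_of_nonneg_left htail (by positivity)
      _ ≤ (2:ℝ) ^ (3*d) * ((4:ℝ) ^ a * (Q+1) ^ (-a) * (1 - (2:ℝ)^(-a))⁻¹) := by
          apply mul_le_mul_of_nonneg_left _ (by positivity)
          exact mul_le_mul_of_nonneg_right hrk₀ hinv
      _ = (2:ℝ) ^ (3 * d) * (1 - (2:ℝ) ^ (-a))⁻¹ * ((4:ℝ) ^ a * (Q + 1) ^ (-a)) := by ring
  · -- Q < 1 : use the full sum
    have hfull : ∑ y ∈ t, (znorm y + 1) ^ (-((d:ℝ)+a)) ≤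
        (2:ℝ) ^ (3*d) * (1 - (2:ℝ) ^ (-a))⁻¹ := by
      have := sum_full ((d:ℝ) + a) (by linarith) t
      rw [hde] at this
      exact this
    have h1 : (1:ℝ) ≤ (4:ℝ) ^ a * (Q+1) ^ (-a) := by
      have h2 : (Q + 1) ^ (-a) ≥ (2:ℝ) ^ (-a) :=
        rpow_neg_antitone (by linarith) (by linarith) ha.le
      have h4 : (4:ℝ) ^ a = ((2:ℝ) ^ a) ^ 2 := by
        rw [← Real.rpow_natCast ((2:ℝ)^a) 2, ← Real.rpow_mul (by norm_num)]
        norm_num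
        rw [show (4:ℝ) = (2:ℝ)^(2:ℕ) by norm_num, ← Real.rpow_natCast (2:ℝ) 2,
          ← Real.rpow_mul (by norm_num), mul_comm]
        norm_num
      have h2a : (0:ℝ) < (2:ℝ) ^ a := Real.rpow_pos_of_pos (by norm_num) _
      have h2na : (2:ℝ) ^ (-a) = ((2:ℝ)^a)⁻¹ := by
        rw [Real.rpow_neg (by norm_num)]
      calc (1:ℝ) = (2:ℝ)^a * ((2:ℝ)^a)⁻¹ := by field_simp
        _ ≤ ((2:ℝ)^a)^2 * ((2:ℝ)^a)⁻¹ := by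
            apply mul_le_mul_of_nonneg_right _ (inv_nonneg.mpr h2a.le)
            nlinarith [Real.one_le_rpow (show (1:ℝ) ≤ 2 by norm_num) ha.le]
        _ ≤ (4:ℝ)^a * (Q+1)^(-a) := by
            rw [h4, ← h2na]
            apply mul_le_mul_of_nonneg_left h2 (by positivity)
    calc ∑ y ∈ t, (znorm y + 1) ^ (-((d:ℝ)+a)) ≤ (2:ℝ) ^ (3*d) * (1 - (2:ℝ) ^ (-a))⁻¹ := hfull
      _ = (2:ℝ) ^ (3*d) * (1 - (2:ℝ) ^ (-a))⁻¹ * 1 := by ring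
      _ ≤ (2:ℝ) ^ (3 * d) * (1 - (2:ℝ) ^ (-a))⁻¹ * ((4:ℝ) ^ a * (Q + 1) ^ (-a)) := by
          apply mul_le_mul_of_nonneg_left h1 (by positivity)

end Stmt3Aux
namespace Stmt3Aux
variable {d : ℕ}

/-- Ball sum, exponent `d - b` with `0 < b ≤ d`. -/
lemma sum_ball (b : ℝ) (hb : 0 < b) (hbd : b ≤ (d:ℝ)) (M : ℝ) (hM : 0 ≤ M)
    (t : Finset (Fin d → ℤ)) (ht : ∀ y ∈ t, znorm y ≤ M) :
    ∑ y ∈ t, (znorm y + 1) ^ (-((d:ℝ) - b)) ≤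
      (2:ℝ) ^ (3 * d) * ((2:ℝ) ^ b * ((2:ℝ) ^ b - 1)⁻¹) * (M + 1) ^ b := by
  have hρ : (1:ℝ) < (2:ℝ) ^ b := Real.one_lt_rpow_iff_of_pos (by norm_num) |>.mpr
    (Or.inl ⟨by norm_num, hb⟩)
  have hde : (d:ℝ) - ((d:ℝ) - b) = b := by ring
  have key := key_count ((d:ℝ) - b) (by linarith) t
  rw [hde] at key
  have hV : ∀ k ∈ t.image psi, ((2:ℝ) ^ b) ^ k ≤ (M + 1) ^ b := by
    intro k hk
    obtain ⟨y, hy, rfl⟩ := Finset.mem_image.mp hk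
    have h1 : (2:ℝ) ^ psi y ≤ M + 1 := le_trans (psi_le y) (by linarith [ht y hy])
    calc ((2:ℝ) ^ b) ^ psi y = ((2:ℝ) ^ (psi y) : ℝ) ^ b := by
          rw [← Real.rpow_natCast ((2:ℝ)^b) (psi y), ← Real.rpow_mul (by norm_num),
            ← Real.rpow_natCast (2:ℝ) (psi y), ← Real.rpow_mul (by norm_num), mul_comm]
      _ ≤ (M + 1) ^ b := Real.rpow_le_rpow (by positivity) h1 hb.le
  have hgrow := geom_finset_grow_le hρ (by positivity) _ hV
  calc ∑ y ∈ t, (znorm y + 1) ^ (-((d:ℝ) - b))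
      ≤ (2:ℝ) ^ (3*d) * ∑ k ∈ t.image psi, ((2:ℝ) ^ b) ^ k := key
    _ ≤ (2:ℝ) ^ (3*d) * ((2:ℝ) ^ b * (M+1) ^ b * ((2:ℝ)^b - 1)⁻¹) :=
        mul_le_mul_of_nonneg_left hgrow (by positivity)
    _ = (2:ℝ) ^ (3 * d) * ((2:ℝ) ^ b * ((2:ℝ) ^ b - 1)⁻¹) * (M + 1) ^ b := by ring

/-- Critical ball sum, exponent `d`. -/
lemma sum_log (M : ℝ) (hM : 0 ≤ M) (t : Finset (Fin d → ℤ))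
    (ht : ∀ y ∈ t, znorm y ≤ M) :
    ∑ y ∈ t, (znorm y + 1) ^ (-(d:ℝ)) ≤
      (2:ℝ) ^ (3 * d) * (2 / Real.log 2) * Real.log (M + 2) := by
  have hde : (d:ℝ) - (d:ℝ) = 0 := by ring
  have key := key_count (d:ℝ) (by positivity) t
  rw [hde] at key
  have hlog2 : (0:ℝ) < Real.log 2 := Real.log_pos (by norm_num)
  have hlogM : Real.log 2 ≤ Real.log (M + 2) :=
    Real.log_le_log (by norm_num) (by linarith)
  set k₁ := Nat.log 2 ⌊M + 1⌋₊ with hk₁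
  have hm1 : 1 ≤ ⌊M + 1⌋₊ := Nat.le_floor (by push_cast; linarith)
  have hub : ∀ k ∈ t.image psi, k ≤ k₁ := by
    intro k hk
    obtain ⟨y, hy, rfl⟩ := Finset.mem_image.mp hk
    have h1 : (2:ℝ) ^ psi y ≤ M + 1 := le_trans (psi_le y) (by linarith [ht y hy])
    have h2 : ((2 ^ psi y : ℕ) : ℝ) ≤ M + 1 := by push_cast; push_cast at h1; linarith
    have h3 : (2 : ℕ) ^ psi y ≤ ⌊M + 1⌋₊ := Nat.le_floor (by exact_mod_cast h2)
    exact (Nat.le_log_iff_pow_le (by norm_num) (by omega)).mpr h3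
  have hcard : ((t.image psi).card : ℝ) ≤ (k₁ : ℝ) + 1 := count_finset_le _ hub
  have hk₁log : (k₁ : ℝ) * Real.log 2 ≤ Real.log (M + 2) := by
    have h1 : ((2 ^ k₁ : ℕ) : ℝ) ≤ M + 1 := by
      have := Nat.pow_log_le_self 2 (show ⌊M+1⌋₊ ≠ 0 by omega)
      calc ((2 ^ k₁ : ℕ) : ℝ) ≤ (⌊M+1⌋₊ : ℝ) := by exact_mod_cast this
        _ ≤ M + 1 := Nat.floor_le (by linarith)
    have h2 : (2:ℝ) ^ k₁ ≤ M + 2 := by push_cast at h1 ⊢; linarith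
    have h3 := Real.log_le_log (by positivity) h2
    rw [Real.log_pow] at h3
    exact_mod_cast h3
  have hsum : ∑ k ∈ t.image psi, ((2:ℝ) ^ (0:ℝ)) ^ k ≤ (2 / Real.log 2) * Real.log (M+2) := by
    have : ∀ k ∈ t.image psi, ((2:ℝ) ^ (0:ℝ)) ^ k = 1 := by
      intro k _; rw [Real.rpow_zero, one_pow]
    rw [Finset.sum_congr rfl this, Finset.sum_const, nsmul_eq_mul, mul_one]
    calc ((t.image psi).card : ℝ) ≤ (k₁ : ℝ) + 1 := hcard
      _ ≤ Real.log (M+2)/Real.log 2 + Real.log (M+2)/Real.log 2 := by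
          have e1 : (k₁:ℝ) ≤ Real.log (M+2)/Real.log 2 := by
            rw [le_div_iff₀ hlog2]; exact hk₁log
          have e2 : (1:ℝ) ≤ Real.log (M+2)/Real.log 2 := by
            rw [le_div_iff₀ hlog2]; linarith
          linarith
      _ = (2 / Real.log 2) * Real.log (M+2) := by ring
  calc ∑ y ∈ t, (znorm y + 1) ^ (-(d:ℝ))
      ≤ (2:ℝ) ^ (3*d) * ∑ k ∈ t.image psi, ((2:ℝ) ^ (0:ℝ)) ^ k := key
    _ ≤ (2:ℝ) ^ (3*d) * ((2 / Real.log 2) * Real.log (M+2)) :=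
        mul_le_mul_of_nonneg_left hsum (by positivity)
    _ = (2:ℝ) ^ (3 * d) * (2 / Real.log 2) * Real.log (M + 2) := by ring

end Stmt3Aux
namespace Stmt3Aux

lemma hasDerivAt_shift_rpow (q : ℝ) {r : ℝ} (hr : 0 < r + 1) :
    HasDerivAt (fun z : ℝ => (z + 1) ^ (-q)) (-q * (r + 1) ^ (-q - 1)) r := by
  have h1 : HasDerivAt (fun x : ℝ => x ^ (-q)) (-q * (r+1) ^ (-q - 1)) (r + 1) :=
    Real.hasDerivAt_rpow_const (Or.inl (ne_of_gt hr))
  have h2 : HasDerivAt (fun z : ℝ => z + 1) 1 r := (hasDerivAt_id r).add_const 1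
  have := h1.comp r h2
  rw [mul_one] at this
  exact this

/-- Lipschitz bound for `(·+1)^(-q)` on `[m, ∞)`. -/
lemma lip_bound {q m : ℝ} (hq : 0 < q) (hm : 0 ≤ m) {a c : ℝ} (ha : m ≤ a) (hc : m ≤ c) :
    |(a + 1) ^ (-q) - (c + 1) ^ (-q)| ≤ q * (m + 1) ^ (-(q + 1)) * |a - c| := by
  have key := Convex.norm_image_sub_le_of_norm_hasDerivWithin_le
    (f := fun z : ℝ => (z + 1) ^ (-q)) (f' := fun z : ℝ => -q * (z + 1) ^ (-q - 1))
    (s := Set.Ici m) (C := q * (m + 1) ^ (-(q + 1)))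
    (fun z hz => (hasDerivAt_shift_rpow q (by simp at hz; linarith)).hasDerivWithinAt)
    (fun z hz => by
      simp only [Set.mem_Ici] at hz
      rw [Real.norm_eq_abs, abs_mul, abs_neg, abs_of_pos hq,
        abs_of_nonneg (Real.rpow_nonneg (by linarith) _)]
      apply mul_le_mul_of_nonneg_left _ hq.le
      rw [show -q - 1 = -(q+1) by ring]
      exact rpow_neg_antitone (by linarith) (by linarith) (by linarith))
    (convex_Ici m) hc ha
  rw [Real.norm_eq_abs, Real.norm_eq_abs] at key
  calc |(a + 1) ^ (-q) - (c + 1) ^ (-q)| ≤ q * (m+1)^(-(q+1)) * |a - c| := key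
  
/-- Second-order Taylor bound for `(·+1)^(-p)` on `[m, ∞)`. -/
lemma taylor_bound {p m : ℝ} (hp : 0 < p) (hm : 0 ≤ m) {a c : ℝ} (ha : m ≤ a) (hc : m ≤ c) :
    |(a + 1) ^ (-p) - (c + 1) ^ (-p) + p * (c + 1) ^ (-(p + 1)) * (a - c)| ≤
      p * (p + 1) * (m + 1) ^ (-(p + 2)) * (a - c) ^ 2 := by
  set G : ℝ → ℝ := fun z => (z + 1) ^ (-p) + p * (c + 1) ^ (-(p + 1)) * (z - c) with hG
  have hmem : Set.uIcc c a ⊆ Set.Ici m := by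
    intro z hz
    rcases Set.mem_uIcc.mp hz with ⟨h1, _⟩ | ⟨h1, _⟩
    · exact le_trans hc h1
    · exact le_trans ha h1
  have key := Convex.norm_image_sub_le_of_norm_hasDerivWithin_le
    (f := G) (f' := fun z : ℝ => -p * (z + 1) ^ (-p - 1) + p * (c + 1) ^ (-(p + 1)))
    (s := Set.uIcc c a) (C := p * (p + 1) * (m + 1) ^ (-(p + 2)) * |a - c|)
    (fun z hz => by
      have hz' : m ≤ z := hmem hz
      have h1 := hasDerivAt_shift_rpow p (show (0:ℝ) < z + 1 by linarith)
      have h2 : HasDerivAt (fun w : ℝ => p * (c + 1) ^ (-(p + 1)) * (w - c))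
          (p * (c + 1) ^ (-(p + 1))) z := by
        simpa using ((hasDerivAt_id z).sub_const c).const_mul (p * (c + 1) ^ (-(p + 1)))
      exact (h1.add h2).hasDerivWithinAt)
    (fun z hz => by
      have hz' : m ≤ z := hmem hz
      have hzc : |c - z| ≤ |a - c| := by
        rcases Set.mem_uIcc.mp hz with ⟨h1, h2⟩ | ⟨h1, h2⟩
        · rw [abs_of_nonpos (by linarith)]
          calc -(c - z) = z - c := by ring
            _ ≤ a - c := by linarith
            _ ≤ |a - c| := le_abs_self _
        · rw [abs_of_nonneg (by linarith)]
          calc c - z ≤ c - a := by linarith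
            _ = -(a - c) := by ring
            _ ≤ |a - c| := neg_le_abs _
      have hlip := lip_bound (q := p + 1) (m := m) (by linarith) hm hc hz'
      simp only [Real.norm_eq_abs]
      rw [show -p * (z + 1) ^ (-p - 1) + p * (c + 1) ^ (-(p + 1)) =
          p * ((c + 1) ^ (-(p+1)) - (z + 1) ^ (-(p+1))) by
            rw [show -p - 1 = -(p+1) by ring]; ring,
        abs_mul, abs_of_pos hp]
      calc p * |(c + 1) ^ (-(p+1)) - (z + 1) ^ (-(p+1))|
          ≤ p * ((p + 1) * (m + 1) ^ (-(p + 1 + 1)) * |c - z|) :=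
            mul_le_mul_of_nonneg_left hlip hp.le
        _ ≤ p * ((p + 1) * (m + 1) ^ (-(p + 2)) * |a - c|) := by
            rw [show -(p + 1 + 1) = -(p+2) by ring]
            apply mul_le_mul_of_nonneg_left _ hp.le
            apply mul_le_mul_of_nonneg_left hzc (by positivity)
        _ = p * (p + 1) * (m + 1) ^ (-(p + 2)) * |a - c| := by ring)
    (convex_uIcc c a) Set.left_mem_uIcc Set.right_mem_uIcc
  have hGa : G a - G c = (a + 1) ^ (-p) - (c + 1) ^ (-p) + p * (c + 1) ^ (-(p + 1)) * (a - c) := by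
    simp only [hG]; ring
  rw [Real.norm_eq_abs, Real.norm_eq_abs, hGa] at key
  calc |(a + 1) ^ (-p) - (c + 1) ^ (-p) + p * (c + 1) ^ (-(p + 1)) * (a - c)|
      ≤ p * (p + 1) * (m + 1) ^ (-(p + 2)) * |a - c| * |a - c| := key
    _ = p * (p + 1) * (m + 1) ^ (-(p + 2)) * (a - c) ^ 2 := by
        rw [mul_assoc, ← abs_mul, ← sq, abs_sq]

end Stmt3Aux
namespace Stmt3Aux

/-- Second–difference estimate for `(·+1)^(-p)`. -/
lemma seconddiff_bound {p : ℝ} (hp : 0 < p) {a b c t : ℝ} (ht : 1 ≤ t) (hc : 2 * t ≤ c)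
    (hac : |a - c| ≤ t) (hbc : |b - c| ≤ t)
    (hpar : a ^ 2 + b ^ 2 = 2 * c ^ 2 + 2 * t ^ 2) :
    |(a + 1) ^ (-p) + (b + 1) ^ (-p) - 2 * (c + 1) ^ (-p)| ≤
      (p * (p + 1) * 2 ^ (p + 3) + 4 * p) * t ^ 2 * (c + 1) ^ (-(p + 2)) := by
  set m := c - t with hm
  have hm0 : 0 ≤ m := by simp only [hm]; linarith
  have hc2 : 2 ≤ c := by linarith
  have ham : m ≤ a := by have := (abs_le.mp hac).1; simp only [hm]; linarith
  have hbm : m ≤ b := by have := (abs_le.mp hbc).1; simp only [hm]; linarith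
  have hcm : m ≤ c := by simp only [hm]; linarith
  have ha0 : 0 ≤ a := by linarith
  have hb0 : 0 ≤ b := by linarith
  -- bound on (m+1)^(-(p+2))
  have hmc : (m + 1) ^ (-(p+2)) ≤ 2 ^ (p+2) * (c + 1) ^ (-(p+2)) := by
    apply rpow_neg_scale (by linarith) (by norm_num) (by linarith)
    simp only [hm]; linarith
  have hTa := taylor_bound hp hm0 ham hcm
  have hTb := taylor_bound hp hm0 hbm hcm
  -- the linear term
  have hsum : (a + c) * (a + b - 2 * c) = 2 * t ^ 2 + (b - c) * (a - b) := by nlinarith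
  have hacpos : 0 < a + c := by linarith
  have habs : |a + b - 2 * c| ≤ 4 * t ^ 2 / (a + c) := by
    rw [le_div_iff₀ hacpos]
    have h1 : |a + b - 2*c| * (a + c) = |(a + c) * (a + b - 2*c)| := by
      rw [abs_mul, abs_of_pos hacpos]; ring
    rw [h1, hsum]
    have h2 : |a - b| ≤ 2 * t := by
      have : a - b = (a - c) - (b - c) := by ring
      calc |a - b| = |(a - c) - (b - c)| := by rw [this]
        _ ≤ |a - c| + |b - c| := abs_sub _ _
        _ ≤ 2 * t := by linarith
    calc |2 * t ^ 2 + (b - c) * (a - b)| ≤ 2 * t ^ 2 + |(b - c) * (a - b)| := by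
          have := abs_add_le (2 * t ^ 2) ((b - c) * (a - b))
          have h0 : |2 * t^2| = 2 * t^2 := abs_of_nonneg (by positivity)
          linarith [this, h0.le]
      _ ≤ 2 * t ^ 2 + t * (2 * t) := by
          rw [abs_mul]
          have := mul_le_mul hbc h2 (abs_nonneg _) (by linarith)
          linarith
      _ = 4 * t ^ 2 := by ring
  have hac1 : c + 1 ≤ a + c := by linarith [(abs_le.mp hac).1]
  have habs2 : |a + b - 2 * c| ≤ 4 * t ^ 2 / (c + 1) := by
    apply le_trans habs
    apply div_le_div_of_nonneg_left (by positivity) (by linarith) hac1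
  have hlin : p * (c+1) ^ (-(p+1)) * |a + b - 2*c| ≤ 4 * p * t^2 * (c+1) ^ (-(p+2)) := by
    have e1 : (c+1) ^ (-(p+1)) * ((c+1) : ℝ)⁻¹ = (c+1) ^ (-(p+2)) := by
      rw [← Real.rpow_neg_one (c+1), ← Real.rpow_add (by linarith)]
      congr 1; ring
    calc p * (c+1) ^ (-(p+1)) * |a + b - 2*c|
        ≤ p * (c+1) ^ (-(p+1)) * (4 * t^2 / (c+1)) := by
          apply mul_le_mul_of_nonneg_left habs2
          positivity
      _ = 4 * p * t^2 * ((c+1) ^ (-(p+1)) * ((c+1):ℝ)⁻¹) := by ring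
      _ = 4 * p * t^2 * (c+1) ^ (-(p+2)) := by rw [e1]
  -- combine
  have hdecomp : (a + 1) ^ (-p) + (b + 1) ^ (-p) - 2 * (c + 1) ^ (-p) =
      ((a + 1) ^ (-p) - (c + 1) ^ (-p) + p * (c + 1) ^ (-(p + 1)) * (a - c))
      + ((b + 1) ^ (-p) - (c + 1) ^ (-p) + p * (c + 1) ^ (-(p + 1)) * (b - c))
      - p * (c + 1) ^ (-(p + 1)) * (a + b - 2 * c) := by ring
  have hsq : ∀ u : ℝ, |u - c| ≤ t → (u - c) ^ 2 ≤ t ^ 2 := by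
    intro u hu
    calc (u - c)^2 = |u - c|^2 := (sq_abs _).symm
      _ ≤ t ^ 2 := by nlinarith [abs_nonneg (u - c)]
  have hT : p * (p+1) * (m + 1) ^ (-(p+2)) * (a - c) ^ 2 +
      p * (p+1) * (m + 1) ^ (-(p+2)) * (b - c) ^ 2 ≤
      p * (p + 1) * 2 ^ (p+3) * t^2 * (c+1) ^ (-(p+2)) := by
    have h1 : p * (p+1) * (m + 1) ^ (-(p+2)) * (a - c) ^ 2 ≤
        p * (p+1) * (2 ^ (p+2) * (c+1)^(-(p+2))) * t ^ 2 := by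
      apply mul_le_mul (mul_le_mul_of_nonneg_left hmc (by positivity)) (hsq a hac)
        (by positivity) (by positivity)
    have h2 : p * (p+1) * (m + 1) ^ (-(p+2)) * (b - c) ^ 2 ≤
        p * (p+1) * (2 ^ (p+2) * (c+1)^(-(p+2))) * t ^ 2 := by
      apply mul_le_mul (mul_le_mul_of_nonneg_left hmc (by positivity)) (hsq b hbc)
        (by positivity) (by positivity)
    have e3 : (2:ℝ) ^ (p+3) = 2 * 2 ^ (p+2) := by
      rw [show p + 3 = 1 + (p+2) by ring, Real.rpow_add (by norm_num : (0:ℝ) < 2),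
        Real.rpow_one]
    calc p * (p+1) * (m + 1) ^ (-(p+2)) * (a - c) ^ 2 +
        p * (p+1) * (m + 1) ^ (-(p+2)) * (b - c) ^ 2
        ≤ 2 * (p * (p+1) * (2 ^ (p+2) * (c+1)^(-(p+2))) * t ^ 2) := by linarith
      _ = p * (p + 1) * (2 * 2 ^ (p+2)) * t^2 * (c+1) ^ (-(p+2)) := by ring
      _ = p * (p + 1) * 2 ^ (p+3) * t^2 * (c+1) ^ (-(p+2)) := by rw [e3]
  calc |(a + 1) ^ (-p) + (b + 1) ^ (-p) - 2 * (c + 1) ^ (-p)|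
      ≤ |(a + 1) ^ (-p) - (c + 1) ^ (-p) + p * (c + 1) ^ (-(p + 1)) * (a - c)|
        + |(b + 1) ^ (-p) - (c + 1) ^ (-p) + p * (c + 1) ^ (-(p + 1)) * (b - c)|
        + p * (c + 1) ^ (-(p + 1)) * |a + b - 2 * c| := by
        rw [hdecomp]
        have h1 := abs_sub (((a + 1) ^ (-p) - (c + 1) ^ (-p) + p * (c + 1) ^ (-(p + 1)) * (a - c))
          + ((b + 1) ^ (-p) - (c + 1) ^ (-p) + p * (c + 1) ^ (-(p + 1)) * (b - c)))
          (p * (c + 1) ^ (-(p + 1)) * (a + b - 2 * c))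
        have h2 := abs_add_le ((a + 1) ^ (-p) - (c + 1) ^ (-p) + p * (c + 1) ^ (-(p + 1)) * (a - c))
          ((b + 1) ^ (-p) - (c + 1) ^ (-p) + p * (c + 1) ^ (-(p + 1)) * (b - c))
        have h3 : |p * (c + 1) ^ (-(p + 1)) * (a + b - 2 * c)| =
            p * (c + 1) ^ (-(p + 1)) * |a + b - 2 * c| := by
          rw [abs_mul, abs_of_nonneg (by positivity : (0:ℝ) ≤ p * (c+1) ^ (-(p+1)))]
        linarith
    _ ≤ p * (p+1) * (m + 1) ^ (-(p+2)) * (a - c) ^ 2 +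
        p * (p+1) * (m + 1) ^ (-(p+2)) * (b - c) ^ 2 +
        4 * p * t^2 * (c+1) ^ (-(p+2)) := by
        have := hTa; have := hTb
        linarith [hTa, hTb, hlin]
    _ ≤ p * (p + 1) * 2 ^ (p+3) * t^2 * (c+1) ^ (-(p+2)) +
        4 * p * t^2 * (c+1) ^ (-(p+2)) := by linarith [hT]
    _ = (p * (p + 1) * 2 ^ (p + 3) + 4 * p) * t ^ 2 * (c + 1) ^ (-(p + 2)) := by ring

end Stmt3Aux
namespace Stmt3Aux
variable {d : ℕ}

/-- Target bound function. -/
noncomputable def TB (d : ℕ) (σ : ℝ) (x : Fin d → ℤ) : ℝ :=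
  if σ = 2 then Real.log (znorm x + 2) * (znorm x + 1) ^ (-(d:ℝ))
  else (znorm x + 1) ^ (-((d:ℝ) - 2 + min σ 2))

/-- Ball-sum bound function. -/
noncomputable def ballB (σ M : ℝ) : ℝ :=
  if σ = 2 then Real.log (M + 2) else if σ < 2 then (M + 1) ^ (2 - σ) else 1

lemma one_le_w (x : Fin d → ℤ) : 1 ≤ znorm x + 1 := by linarith [znorm_nonneg x]

lemma w_pos (x : Fin d → ℤ) : 0 < znorm x + 1 := by linarith [znorm_nonneg x]

lemma TB_pos (σ : ℝ) (x : Fin d → ℤ) : 0 < TB d σ x := by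
  unfold TB
  split
  · apply mul_pos _ (Real.rpow_pos_of_pos (w_pos x) _)
    apply Real.log_pos; linarith [znorm_nonneg x]
  · exact Real.rpow_pos_of_pos (w_pos x) _

lemma ballB_nonneg {σ M : ℝ} (hM : 0 ≤ M) : 0 ≤ ballB σ M := by
  unfold ballB
  split
  · apply Real.log_nonneg; linarith
  · split
    · positivity
    · norm_num

lemma le_TB (hd : 2 < d) (σ : ℝ) (hσ0 : 0 < σ) (x : Fin d → ℤ) {e : ℝ}
    (he : (d:ℝ) - 2 + min σ 2 ≤ e) :
    (znorm x + 1) ^ (-e) ≤ (Real.log 2)⁻¹ * TB d σ x + TB d σ x := by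
  have hw := one_le_w x
  have hlog2 : (0:ℝ) < Real.log 2 := Real.log_pos (by norm_num)
  unfold TB
  split
  · rename_i h2
    subst h2
    have h1 : (znorm x + 1) ^ (-e) ≤ (znorm x + 1) ^ (-(d:ℝ)) := by
      apply Real.rpow_le_rpow_of_exponent_le hw
      simp at he ⊢
      linarith [he]
    have h2 : Real.log 2 ≤ Real.log (znorm x + 2) :=
      Real.log_le_log (by norm_num) (by linarith [znorm_nonneg x])
    have h3 : (znorm x + 1) ^ (-(d:ℝ)) ≤
        (Real.log 2)⁻¹ * (Real.log (znorm x + 2) * (znorm x + 1) ^ (-(d:ℝ))) := by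
      rw [← mul_assoc]
      nth_rewrite 1 [← one_mul ((znorm x + 1) ^ (-(d:ℝ)))]
      apply mul_le_mul_of_nonneg_right _ (Real.rpow_nonneg (by linarith) _)
      rw [← inv_mul_cancel₀ (ne_of_gt hlog2)]
      apply mul_le_mul_of_nonneg_left h2 (inv_nonneg.mpr hlog2.le)
    have h4 : (0:ℝ) ≤ Real.log (znorm x + 2) * (znorm x + 1) ^ (-(d:ℝ)) := by
      apply mul_nonneg (Real.log_nonneg (by linarith [znorm_nonneg x]))
        (Real.rpow_nonneg (by linarith) _)
    linarith [h1.trans h3]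
  · have h1 : (znorm x + 1) ^ (-e) ≤ (znorm x + 1) ^ (-((d:ℝ) - 2 + min σ 2)) := by
      apply Real.rpow_le_rpow_of_exponent_le hw
      linarith
    have h2 : (0:ℝ) ≤ (Real.log 2)⁻¹ * (znorm x + 1) ^ (-((d:ℝ) - 2 + min σ 2)) := by
      apply mul_nonneg (inv_nonneg.mpr hlog2.le) (Real.rpow_nonneg (by linarith) _)
    linarith

lemma combine (σ : ℝ) (hσ0 : 0 < σ) (x : Fin d → ℤ) {M : ℝ} (h0 : 0 ≤ M)
    (hM : M ≤ znorm x) :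
    (znorm x + 1) ^ (-(d:ℝ)) * ballB σ M ≤ TB d σ x := by
  have hw := one_le_w x
  unfold TB ballB
  split
  · rw [mul_comm]
    apply mul_le_mul_of_nonneg_right _ (Real.rpow_nonneg (by linarith) _)
    exact Real.log_le_log (by linarith) (by linarith)
  · rename_i h2
    split
    · rename_i hlt
      have hmin : min σ 2 = σ := min_eq_left hlt.le
      rw [hmin]
      have h1 : (M+1) ^ (2 - σ) ≤ (znorm x + 1) ^ (2 - σ) :=
        Real.rpow_le_rpow (by linarith) (by linarith) (by linarith)
      calc (znorm x + 1) ^ (-(d:ℝ)) * (M+1) ^ (2 - σ)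
          ≤ (znorm x + 1) ^ (-(d:ℝ)) * (znorm x + 1) ^ (2 - σ) :=
            mul_le_mul_of_nonneg_left h1 (Real.rpow_nonneg (by linarith) _)
        _ = (znorm x + 1) ^ (-((d:ℝ) - 2 + σ)) := by
            rw [← Real.rpow_add (w_pos x)]
            congr 1; ring
    · rename_i hge
      push_neg at hge
      have hmin : min σ 2 = 2 := min_eq_right hge
      rw [hmin, mul_one]
      apply Real.rpow_le_rpow_of_exponent_le hw
      push_cast; linarith

/-- Ball sums with exponent `d - 2 + σ`. -/
lemma trio (hd : 2 < d) (σ : ℝ) (hσ0 : 0 < σ) :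
    ∃ K, 0 < K ∧ ∀ M : ℝ, 0 ≤ M → ∀ t : Finset (Fin d → ℤ), (∀ y ∈ t, znorm y ≤ M) →
      ∑ y ∈ t, (znorm y + 1) ^ (-((d:ℝ) - 2 + σ)) ≤ K * ballB σ M := by
  have hd2 : (2:ℝ) < (d:ℝ) := by exact_mod_cast hd
  rcases lt_trichotomy σ 2 with hσ | hσ | hσ
  · -- σ < 2 : ball sum with b = 2 - σ
    refine ⟨(2:ℝ) ^ (3 * d) * ((2:ℝ) ^ (2-σ) * ((2:ℝ) ^ (2-σ) - 1)⁻¹), ?_, ?_⟩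
    · have h1 : (1:ℝ) < (2:ℝ) ^ (2-σ) := Real.one_lt_rpow_iff_of_pos (by norm_num) |>.mpr
        (Or.inl ⟨by norm_num, by linarith⟩)
      have : (0:ℝ) < ((2:ℝ) ^ (2-σ) - 1)⁻¹ := inv_pos.mpr (by linarith)
      positivity
    · intro M hM t ht
      have := sum_ball (2 - σ) (by linarith) (by linarith) M hM t ht
      rw [show (d:ℝ) - (2 - σ) = (d:ℝ) - 2 + σ by ring] at this
      unfold ballB
      rw [if_neg (by linarith), if_pos hσ]
      exact this
  · -- σ = 2 : log case
    subst hσ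
    refine ⟨(2:ℝ) ^ (3 * d) * (2 / Real.log 2), ?_, ?_⟩
    · have := Real.log_pos (show (1:ℝ) < 2 by norm_num); positivity
    · intro M hM t ht
      have := sum_log M hM t ht
      rw [show (d:ℝ) - 2 + 2 = (d:ℝ) by ring]
      unfold ballB
      rw [if_pos rfl]
      exact this
  · -- σ > 2 : full sum
    refine ⟨(2:ℝ) ^ (3 * d) * (1 - (2:ℝ) ^ ((d:ℝ) - ((d:ℝ) - 2 + σ)))⁻¹, ?_, ?_⟩
    · have h1 : (2:ℝ) ^ ((d:ℝ) - ((d:ℝ) - 2 + σ)) < 1 :=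
        Real.rpow_lt_one_of_one_lt_of_neg (by norm_num) (by linarith)
      have h0 : (0:ℝ) ≤ (2:ℝ) ^ ((d:ℝ) - ((d:ℝ) - 2 + σ)) := Real.rpow_nonneg (by norm_num) _
      have : (0:ℝ) < (1 - (2:ℝ) ^ ((d:ℝ) - ((d:ℝ) - 2 + σ)))⁻¹ := inv_pos.mpr (by linarith)
      positivity
    · intro M hM t ht
      have := sum_full ((d:ℝ) - 2 + σ) (by linarith) t
      unfold ballB
      rw [if_neg (by linarith), if_neg (by linarith), mul_one]
      exact this

end Stmt3Aux
namespace Stmt3Aux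
variable {d : ℕ}

lemma w_quarter (x y : Fin d → ℤ) (h : znorm x / 4 ≤ znorm (x - y)) :
    (znorm x + 1) / 4 ≤ znorm (x - y) + 1 := by linarith

lemma w_three_quarter (x y : Fin d → ℤ) (h : znorm (x - y) < znorm x / 4) :
    (znorm x + 1) / (4/3) ≤ znorm y + 1 := by
  have htri : znorm x ≤ znorm (x - y) + znorm y := by
    have h1 := znorm_sub_znorm_le x (x - y)
    have h2 : x - (x - y) = y := by abel
    rw [h2] at h1
    linarith
  have := znorm_nonneg x
  linarith

/-- Master bound for the error-term convolution. -/
lemma MB1 (hd : 2 < d) (σ : ℝ) (hσ0 : 0 < σ) :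
    ∃ K, 0 < K ∧ ∀ x : Fin d → ℤ, ∀ t : Finset (Fin d → ℤ),
      ∑ y ∈ t, (znorm (x - y) + 1) ^ (-((d:ℝ) - 2 + σ)) * (znorm y + 1) ^ (-((d:ℝ) + σ)) ≤
        K * TB d σ x := by
  classical
  have hd2 : (2:ℝ) < (d:ℝ) := by exact_mod_cast hd
  obtain ⟨K₁, hK₁, htrio⟩ := trio hd σ hσ0
  set q : ℝ := (d:ℝ) - 2 + σ with hq
  have hq0 : 0 < q := by simp only [hq]; linarith
  -- full sum constant for exponent d+σ
  set F : ℝ := (2:ℝ) ^ (3 * d) * (1 - (2:ℝ) ^ ((d:ℝ) - ((d:ℝ) + σ)))⁻¹ with hF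
  have hF0 : 0 < F := by
    have h1 : (2:ℝ) ^ ((d:ℝ) - ((d:ℝ) + σ)) < 1 :=
      Real.rpow_lt_one_of_one_lt_of_neg (by norm_num) (by linarith)
    have h0 : (0:ℝ) ≤ (2:ℝ) ^ ((d:ℝ) - ((d:ℝ) + σ)) := Real.rpow_nonneg (by norm_num) _
    have : (0:ℝ) < (1 - (2:ℝ) ^ ((d:ℝ) - ((d:ℝ) + σ)))⁻¹ := inv_pos.mpr (by linarith)
    simp only [hF]; positivity
  have hlog2 : (0:ℝ) < Real.log 2 := Real.log_pos (by norm_num)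
  refine ⟨(4:ℝ) ^ q * F * ((Real.log 2)⁻¹ + 1) + (4/3:ℝ) ^ ((d:ℝ) + σ) * K₁, by positivity, ?_⟩
  intro x t
  have hwx := w_pos x
  set t₁ := t.filter (fun y => znorm x / 4 ≤ znorm (x - y)) with ht₁
  set t₂ := t.filter (fun y => ¬ znorm x / 4 ≤ znorm (x - y)) with ht₂
  have hsplit : ∑ y ∈ t, (znorm (x - y) + 1) ^ (-q) * (znorm y + 1) ^ (-((d:ℝ) + σ)) =
      ∑ y ∈ t₁, (znorm (x - y) + 1) ^ (-q) * (znorm y + 1) ^ (-((d:ℝ) + σ)) +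
      ∑ y ∈ t₂, (znorm (x - y) + 1) ^ (-q) * (znorm y + 1) ^ (-((d:ℝ) + σ)) :=
    (Finset.sum_filter_add_sum_filter_not t _ _).symm
  -- piece 1
  have hp1 : ∑ y ∈ t₁, (znorm (x - y) + 1) ^ (-q) * (znorm y + 1) ^ (-((d:ℝ) + σ)) ≤
      (4:ℝ) ^ q * (znorm x + 1) ^ (-q) * F := by
    have hterm : ∀ y ∈ t₁, (znorm (x - y) + 1) ^ (-q) * (znorm y + 1) ^ (-((d:ℝ) + σ)) ≤
        (4:ℝ) ^ q * (znorm x + 1) ^ (-q) * (znorm y + 1) ^ (-((d:ℝ) + σ)) := by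
      intro y hy
      rw [ht₁, Finset.mem_filter] at hy
      have h1 : (znorm (x - y) + 1) ^ (-q) ≤ (4:ℝ) ^ q * (znorm x + 1) ^ (-q) :=
        rpow_neg_scale (w_pos x) (by norm_num) hq0.le (w_quarter x y hy.2)
      apply mul_le_mul_of_nonneg_right h1 (Real.rpow_nonneg (w_pos y).le _)
    calc ∑ y ∈ t₁, (znorm (x - y) + 1) ^ (-q) * (znorm y + 1) ^ (-((d:ℝ) + σ))
        ≤ ∑ y ∈ t₁, (4:ℝ) ^ q * (znorm x + 1) ^ (-q) * (znorm y + 1) ^ (-((d:ℝ) + σ)) :=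
          Finset.sum_le_sum hterm
      _ = (4:ℝ) ^ q * (znorm x + 1) ^ (-q) *
            ∑ y ∈ t₁, (znorm y + 1) ^ (-((d:ℝ) + σ)) := by rw [Finset.mul_sum]
      _ ≤ (4:ℝ) ^ q * (znorm x + 1) ^ (-q) * F := by
          apply mul_le_mul_of_nonneg_left _ (by positivity)
          exact sum_full ((d:ℝ) + σ) (by linarith) t₁
  -- piece 2
  have hp2 : ∑ y ∈ t₂, (znorm (x - y) + 1) ^ (-q) * (znorm y + 1) ^ (-((d:ℝ) + σ)) ≤
      (4/3:ℝ) ^ ((d:ℝ) + σ) * (znorm x + 1) ^ (-(d:ℝ)) * (K₁ * ballB σ (znorm x / 4)) := by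
    have hterm : ∀ y ∈ t₂, (znorm (x - y) + 1) ^ (-q) * (znorm y + 1) ^ (-((d:ℝ) + σ)) ≤
        (4/3:ℝ) ^ ((d:ℝ) + σ) * (znorm x + 1) ^ (-((d:ℝ) + σ)) *
          (znorm (x - y) + 1) ^ (-q) := by
      intro y hy
      rw [ht₂, Finset.mem_filter] at hy
      push_neg at hy
      have h1 : (znorm y + 1) ^ (-((d:ℝ) + σ)) ≤
          (4/3:ℝ) ^ ((d:ℝ) + σ) * (znorm x + 1) ^ (-((d:ℝ) + σ)) :=
        rpow_neg_scale (w_pos x) (by norm_num) (by linarith) (w_three_quarter x y hy.2)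
      calc (znorm (x - y) + 1) ^ (-q) * (znorm y + 1) ^ (-((d:ℝ) + σ))
          ≤ (znorm (x - y) + 1) ^ (-q) *
            ((4/3:ℝ) ^ ((d:ℝ) + σ) * (znorm x + 1) ^ (-((d:ℝ) + σ))) :=
            mul_le_mul_of_nonneg_left h1 (Real.rpow_nonneg (w_pos _).le _)
        _ = (4/3:ℝ) ^ ((d:ℝ) + σ) * (znorm x + 1) ^ (-((d:ℝ) + σ)) *
            (znorm (x - y) + 1) ^ (-q) := by ring
    have himg : ∑ y ∈ t₂, (znorm (x - y) + 1) ^ (-q) =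
        ∑ z ∈ t₂.image (fun y => x - y), (znorm z + 1) ^ (-q) := by
      rw [Finset.sum_image]
      intro a _ b _ hab
      have h : x - (x - a) = x - (x - b) := by simp only at hab; rw [hab]
      simpa using h
    have hball : ∑ z ∈ t₂.image (fun y => x - y), (znorm z + 1) ^ (-q) ≤
        K₁ * ballB σ (znorm x / 4) := by
      apply htrio (znorm x / 4) (by linarith [znorm_nonneg x])
      intro z hz
      obtain ⟨y, hy, rfl⟩ := Finset.mem_image.mp hz
      rw [ht₂, Finset.mem_filter] at hy
      push_neg at hy
      exact hy.2.le
    calc ∑ y ∈ t₂, (znorm (x - y) + 1) ^ (-q) * (znorm y + 1) ^ (-((d:ℝ) + σ))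
        ≤ ∑ y ∈ t₂, (4/3:ℝ) ^ ((d:ℝ) + σ) * (znorm x + 1) ^ (-((d:ℝ) + σ)) *
            (znorm (x - y) + 1) ^ (-q) := Finset.sum_le_sum hterm
      _ = (4/3:ℝ) ^ ((d:ℝ) + σ) * (znorm x + 1) ^ (-((d:ℝ) + σ)) *
            ∑ y ∈ t₂, (znorm (x - y) + 1) ^ (-q) := by rw [Finset.mul_sum]
      _ ≤ (4/3:ℝ) ^ ((d:ℝ) + σ) * (znorm x + 1) ^ (-(d:ℝ)) *
            ∑ y ∈ t₂, (znorm (x - y) + 1) ^ (-q) := by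
          apply mul_le_mul_of_nonneg_right _ (Finset.sum_nonneg
            (fun y _ => Real.rpow_nonneg (w_pos _).le _))
          apply mul_le_mul_of_nonneg_left _ (by positivity)
          apply Real.rpow_le_rpow_of_exponent_le (one_le_w x)
          linarith
      _ ≤ (4/3:ℝ) ^ ((d:ℝ) + σ) * (znorm x + 1) ^ (-(d:ℝ)) * (K₁ * ballB σ (znorm x / 4)) := by
          apply mul_le_mul_of_nonneg_left _ (by positivity)
          rw [himg]; exact hball
  -- combine
  have hTB1 : (znorm x + 1) ^ (-q) ≤ (Real.log 2)⁻¹ * TB d σ x + TB d σ x :=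
    le_TB hd σ hσ0 x (by simp only [hq]; have : min σ 2 ≤ σ := min_le_left _ _; linarith)
  have hTB2 : (znorm x + 1) ^ (-(d:ℝ)) * ballB σ (znorm x / 4) ≤ TB d σ x :=
    combine σ hσ0 x (by linarith [znorm_nonneg x]) (by linarith [znorm_nonneg x])
  have hTBpos := TB_pos (d := d) σ x
  have hbB := ballB_nonneg (σ := σ) (M := znorm x / 4) (by linarith [znorm_nonneg x])
  calc ∑ y ∈ t, (znorm (x - y) + 1) ^ (-q) * (znorm y + 1) ^ (-((d:ℝ) + σ))
      ≤ (4:ℝ) ^ q * (znorm x + 1) ^ (-q) * F +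
        (4/3:ℝ) ^ ((d:ℝ) + σ) * (znorm x + 1) ^ (-(d:ℝ)) * (K₁ * ballB σ (znorm x / 4)) := by
        rw [hsplit]; exact add_le_add hp1 hp2
    _ ≤ (4:ℝ) ^ q * ((Real.log 2)⁻¹ * TB d σ x + TB d σ x) * F +
        (4/3:ℝ) ^ ((d:ℝ) + σ) * K₁ * TB d σ x := by
        apply add_le_add
        · apply mul_le_mul_of_nonneg_right _ hF0.le
          exact mul_le_mul_of_nonneg_left hTB1 (by positivity)
        · calc (4/3:ℝ) ^ ((d:ℝ) + σ) * (znorm x + 1) ^ (-(d:ℝ)) *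
              (K₁ * ballB σ (znorm x / 4))
              = (4/3:ℝ) ^ ((d:ℝ) + σ) * K₁ *
                ((znorm x + 1) ^ (-(d:ℝ)) * ballB σ (znorm x / 4)) := by ring
            _ ≤ (4/3:ℝ) ^ ((d:ℝ) + σ) * K₁ * TB d σ x := by
                apply mul_le_mul_of_nonneg_left hTB2 (by positivity)
    _ = ((4:ℝ) ^ q * F * ((Real.log 2)⁻¹ + 1) + (4/3:ℝ) ^ ((d:ℝ) + σ) * K₁) * TB d σ x := by
        ring

end Stmt3Aux
namespace Stmt3Aux
variable {d : ℕ}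

/-- Master bound for the far part of the difference term. -/
lemma MB2 (hd : 2 < d) (σ : ℝ) (hσ0 : 0 < σ) :
    ∃ K, 0 < K ∧ ∀ x : Fin d → ℤ, ∀ t : Finset (Fin d → ℤ),
      (∀ y ∈ t, znorm x / 2 < znorm y) →
      ∑ y ∈ t, ((znorm (x - y) + 1) ^ (-((d:ℝ) - 2)) + (znorm x + 1) ^ (-((d:ℝ) - 2))) *
          (znorm y + 1) ^ (-((d:ℝ) + σ)) ≤
        K * (znorm x + 1) ^ (-((d:ℝ) - 2 + σ)) := by
  classical
  have hd2 : (2:ℝ) < (d:ℝ) := by exact_mod_cast hd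
  set p : ℝ := (d:ℝ) - 2 with hp
  have hp0 : 0 < p := by simp only [hp]; linarith
  -- tail constant
  set T : ℝ := (2:ℝ) ^ (3 * d) * (1 - (2:ℝ) ^ (-σ))⁻¹ * (4:ℝ) ^ σ with hT
  have hT0 : 0 < T := by
    have h1 : (2:ℝ) ^ (-σ) < 1 :=
      Real.rpow_lt_one_of_one_lt_of_neg (by norm_num) (by linarith)
    have h0 : (0:ℝ) ≤ (2:ℝ) ^ (-σ) := Real.rpow_nonneg (by norm_num) _
    have : (0:ℝ) < (1 - (2:ℝ) ^ (-σ))⁻¹ := inv_pos.mpr (by linarith)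
    have h4 : (0:ℝ) < (4:ℝ) ^ σ := Real.rpow_pos_of_pos (by norm_num) _
    simp only [hT]; positivity
  -- ball constant for exponent p = d - 2 (b = 2)
  set Kb : ℝ := (2:ℝ) ^ (3 * d) * ((2:ℝ) ^ (2:ℝ) * ((2:ℝ) ^ (2:ℝ) - 1)⁻¹) with hKb
  have hKb0 : 0 < Kb := by
    have h1 : (1:ℝ) < (2:ℝ) ^ (2:ℝ) := Real.one_lt_rpow_iff_of_pos (by norm_num) |>.mpr
      (Or.inl ⟨by norm_num, by norm_num⟩)
    have : (0:ℝ) < ((2:ℝ) ^ (2:ℝ) - 1)⁻¹ := inv_pos.mpr (by linarith)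
    have h2 : (0:ℝ) < (2:ℝ) ^ (2:ℝ) := Real.rpow_pos_of_pos (by norm_num) _
    simp only [hKb]; positivity
  -- tail sum of g-weights bound
  have htail : ∀ x : Fin d → ℤ, ∀ u : Finset (Fin d → ℤ), (∀ y ∈ u, znorm x / 2 < znorm y) →
      ∑ y ∈ u, (znorm y + 1) ^ (-((d:ℝ) + σ)) ≤ T * (2:ℝ) ^ σ * (znorm x + 1) ^ (-σ) := by
    intro x u hu
    have h1 := sum_tail σ hσ0 (znorm x / 2) (by linarith [znorm_nonneg x]) u hu
    have h2 : (znorm x / 2 + 1) ^ (-σ) ≤ (2:ℝ) ^ σ * (znorm x + 1) ^ (-σ) :=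
      rpow_neg_scale (w_pos x) (by norm_num) hσ0.le (by linarith [znorm_nonneg x])
    calc ∑ y ∈ u, (znorm y + 1) ^ (-((d:ℝ) + σ))
        ≤ (2:ℝ) ^ (3 * d) * (1 - (2:ℝ) ^ (-σ))⁻¹ * ((4:ℝ) ^ σ * (znorm x / 2 + 1) ^ (-σ)) := h1
      _ = T * (znorm x / 2 + 1) ^ (-σ) := by rw [hT]; ring
      _ ≤ T * ((2:ℝ) ^ σ * (znorm x + 1) ^ (-σ)) := mul_le_mul_of_nonneg_left h2 hT0.le
      _ = T * (2:ℝ) ^ σ * (znorm x + 1) ^ (-σ) := by ring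
  refine ⟨T * (2:ℝ) ^ σ + (4:ℝ) ^ p * T * (2:ℝ) ^ σ + (4/3:ℝ) ^ ((d:ℝ) + σ) * Kb, ?_, ?_⟩
  · have h2σ : (0:ℝ) < (2:ℝ) ^ σ := Real.rpow_pos_of_pos (by norm_num) _
    have h4p : (0:ℝ) < (4:ℝ) ^ p := Real.rpow_pos_of_pos (by norm_num) _
    have h43 : (0:ℝ) < (4/3:ℝ) ^ ((d:ℝ) + σ) := Real.rpow_pos_of_pos (by norm_num) _
    positivity
  intro x t ht
  have hwx := w_pos x
  -- additive split of the summand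
  have hsum_split : ∑ y ∈ t, ((znorm (x - y) + 1) ^ (-p) + (znorm x + 1) ^ (-p)) *
      (znorm y + 1) ^ (-((d:ℝ) + σ)) =
      ∑ y ∈ t, (znorm (x - y) + 1) ^ (-p) * (znorm y + 1) ^ (-((d:ℝ) + σ)) +
      ∑ y ∈ t, (znorm x + 1) ^ (-p) * (znorm y + 1) ^ (-((d:ℝ) + σ)) := by
    rw [← Finset.sum_add_distrib]
    refine Finset.sum_congr rfl (fun y _ => by ring)
  -- piece A : the constant h(x) part
  have hA : ∑ y ∈ t, (znorm x + 1) ^ (-p) * (znorm y + 1) ^ (-((d:ℝ) + σ)) ≤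
      T * (2:ℝ) ^ σ * (znorm x + 1) ^ (-(p + σ)) := by
    rw [← Finset.mul_sum]
    calc (znorm x + 1) ^ (-p) * ∑ y ∈ t, (znorm y + 1) ^ (-((d:ℝ) + σ))
        ≤ (znorm x + 1) ^ (-p) * (T * (2:ℝ) ^ σ * (znorm x + 1) ^ (-σ)) := by
          apply mul_le_mul_of_nonneg_left (htail x t ht) (Real.rpow_nonneg hwx.le _)
      _ = T * (2:ℝ) ^ σ * ((znorm x + 1) ^ (-p) * (znorm x + 1) ^ (-σ)) := by ring
      _ = T * (2:ℝ) ^ σ * (znorm x + 1) ^ (-(p + σ)) := by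
          rw [← Real.rpow_add hwx]; congr 2; ring
  -- piece B : the h(x-y) part, split again
  set t₁ := t.filter (fun y => znorm x / 4 ≤ znorm (x - y)) with ht₁
  set t₂ := t.filter (fun y => ¬ znorm x / 4 ≤ znorm (x - y)) with ht₂
  have hsplit : ∑ y ∈ t, (znorm (x - y) + 1) ^ (-p) * (znorm y + 1) ^ (-((d:ℝ) + σ)) =
      ∑ y ∈ t₁, (znorm (x - y) + 1) ^ (-p) * (znorm y + 1) ^ (-((d:ℝ) + σ)) +
      ∑ y ∈ t₂, (znorm (x - y) + 1) ^ (-p) * (znorm y + 1) ^ (-((d:ℝ) + σ)) :=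
    (Finset.sum_filter_add_sum_filter_not t _ _).symm
  have hB1 : ∑ y ∈ t₁, (znorm (x - y) + 1) ^ (-p) * (znorm y + 1) ^ (-((d:ℝ) + σ)) ≤
      (4:ℝ) ^ p * T * (2:ℝ) ^ σ * (znorm x + 1) ^ (-(p + σ)) := by
    have hterm : ∀ y ∈ t₁, (znorm (x - y) + 1) ^ (-p) * (znorm y + 1) ^ (-((d:ℝ) + σ)) ≤
        (4:ℝ) ^ p * (znorm x + 1) ^ (-p) * (znorm y + 1) ^ (-((d:ℝ) + σ)) := by
      intro y hy
      rw [ht₁, Finset.mem_filter] at hy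
      have h1 : (znorm (x - y) + 1) ^ (-p) ≤ (4:ℝ) ^ p * (znorm x + 1) ^ (-p) :=
        rpow_neg_scale hwx (by norm_num) hp0.le (w_quarter x y hy.2)
      exact mul_le_mul_of_nonneg_right h1 (Real.rpow_nonneg (w_pos y).le _)
    have ht₁sub : ∀ y ∈ t₁, znorm x / 2 < znorm y := by
      intro y hy
      rw [ht₁, Finset.mem_filter] at hy
      exact ht y hy.1
    calc ∑ y ∈ t₁, (znorm (x - y) + 1) ^ (-p) * (znorm y + 1) ^ (-((d:ℝ) + σ))
        ≤ ∑ y ∈ t₁, (4:ℝ) ^ p * (znorm x + 1) ^ (-p) * (znorm y + 1) ^ (-((d:ℝ) + σ)) :=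
          Finset.sum_le_sum hterm
      _ = (4:ℝ) ^ p * (znorm x + 1) ^ (-p) * ∑ y ∈ t₁, (znorm y + 1) ^ (-((d:ℝ) + σ)) := by
          rw [Finset.mul_sum]
      _ ≤ (4:ℝ) ^ p * (znorm x + 1) ^ (-p) * (T * (2:ℝ) ^ σ * (znorm x + 1) ^ (-σ)) := by
          apply mul_le_mul_of_nonneg_left (htail x t₁ ht₁sub) (by positivity)
      _ = (4:ℝ) ^ p * T * (2:ℝ) ^ σ * ((znorm x + 1) ^ (-p) * (znorm x + 1) ^ (-σ)) := by ring
      _ = (4:ℝ) ^ p * T * (2:ℝ) ^ σ * (znorm x + 1) ^ (-(p + σ)) := by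
          rw [← Real.rpow_add hwx]; congr 2; ring
  have hB2 : ∑ y ∈ t₂, (znorm (x - y) + 1) ^ (-p) * (znorm y + 1) ^ (-((d:ℝ) + σ)) ≤
      (4/3:ℝ) ^ ((d:ℝ) + σ) * Kb * (znorm x + 1) ^ (-(p + σ)) := by
    have hterm : ∀ y ∈ t₂, (znorm (x - y) + 1) ^ (-p) * (znorm y + 1) ^ (-((d:ℝ) + σ)) ≤
        (4/3:ℝ) ^ ((d:ℝ) + σ) * (znorm x + 1) ^ (-((d:ℝ) + σ)) * (znorm (x - y) + 1) ^ (-p) := by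
      intro y hy
      rw [ht₂, Finset.mem_filter] at hy
      push_neg at hy
      have h1 : (znorm y + 1) ^ (-((d:ℝ) + σ)) ≤
          (4/3:ℝ) ^ ((d:ℝ) + σ) * (znorm x + 1) ^ (-((d:ℝ) + σ)) :=
        rpow_neg_scale hwx (by norm_num) (by linarith) (w_three_quarter x y hy.2)
      calc (znorm (x - y) + 1) ^ (-p) * (znorm y + 1) ^ (-((d:ℝ) + σ))
          ≤ (znorm (x - y) + 1) ^ (-p) *
            ((4/3:ℝ) ^ ((d:ℝ) + σ) * (znorm x + 1) ^ (-((d:ℝ) + σ))) :=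
            mul_le_mul_of_nonneg_left h1 (Real.rpow_nonneg (w_pos _).le _)
        _ = (4/3:ℝ) ^ ((d:ℝ) + σ) * (znorm x + 1) ^ (-((d:ℝ) + σ)) *
            (znorm (x - y) + 1) ^ (-p) := by ring
    have himg : ∑ y ∈ t₂, (znorm (x - y) + 1) ^ (-p) =
        ∑ z ∈ t₂.image (fun y => x - y), (znorm z + 1) ^ (-p) := by
      rw [Finset.sum_image]
      intro a _ b _ hab
      have h : x - (x - a) = x - (x - b) := by simp only at hab; rw [hab]
      simpa using h
    have hball : ∑ z ∈ t₂.image (fun y => x - y), (znorm z + 1) ^ (-p) ≤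
        Kb * (znorm x / 4 + 1) ^ (2:ℝ) := by
      have := sum_ball (d := d) 2 (by norm_num) (by linarith) (znorm x / 4)
        (by linarith [znorm_nonneg x]) (t₂.image (fun y => x - y)) ?_
      · rw [hKb]
        convert this using 3
      · intro z hz
        obtain ⟨y, hy, rfl⟩ := Finset.mem_image.mp hz
        rw [ht₂, Finset.mem_filter] at hy
        push_neg at hy
        exact hy.2.le
    have hM2 : (znorm x / 4 + 1) ^ (2:ℝ) ≤ (znorm x + 1) ^ (2:ℝ) :=
      Real.rpow_le_rpow (by linarith [znorm_nonneg x]) (by linarith [znorm_nonneg x])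
        (by norm_num)
    calc ∑ y ∈ t₂, (znorm (x - y) + 1) ^ (-p) * (znorm y + 1) ^ (-((d:ℝ) + σ))
        ≤ ∑ y ∈ t₂, (4/3:ℝ) ^ ((d:ℝ) + σ) * (znorm x + 1) ^ (-((d:ℝ) + σ)) *
            (znorm (x - y) + 1) ^ (-p) := Finset.sum_le_sum hterm
      _ = (4/3:ℝ) ^ ((d:ℝ) + σ) * (znorm x + 1) ^ (-((d:ℝ) + σ)) *
            ∑ y ∈ t₂, (znorm (x - y) + 1) ^ (-p) := by rw [Finset.mul_sum]
      _ ≤ (4/3:ℝ) ^ ((d:ℝ) + σ) * (znorm x + 1) ^ (-((d:ℝ) + σ)) *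
            (Kb * (znorm x + 1) ^ (2:ℝ)) := by
          apply mul_le_mul_of_nonneg_left _ (by positivity)
          rw [himg]
          exact hball.trans (mul_le_mul_of_nonneg_left hM2 hKb0.le)
      _ = (4/3:ℝ) ^ ((d:ℝ) + σ) * Kb *
            ((znorm x + 1) ^ (-((d:ℝ) + σ)) * (znorm x + 1) ^ (2:ℝ)) := by ring
      _ = (4/3:ℝ) ^ ((d:ℝ) + σ) * Kb * (znorm x + 1) ^ (-(p + σ)) := by
          rw [← Real.rpow_add hwx]
          congr 2
          simp only [hp]; ring
  calc ∑ y ∈ t, ((znorm (x - y) + 1) ^ (-p) + (znorm x + 1) ^ (-p)) *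
        (znorm y + 1) ^ (-((d:ℝ) + σ))
      ≤ (4:ℝ) ^ p * T * (2:ℝ) ^ σ * (znorm x + 1) ^ (-(p + σ)) +
        (4/3:ℝ) ^ ((d:ℝ) + σ) * Kb * (znorm x + 1) ^ (-(p + σ)) +
        T * (2:ℝ) ^ σ * (znorm x + 1) ^ (-(p + σ)) := by
        rw [hsum_split, hsplit]
        have := add_le_add (add_le_add hB1 hB2) hA
        linarith [this]
    _ = (T * (2:ℝ) ^ σ + (4:ℝ) ^ p * T * (2:ℝ) ^ σ + (4/3:ℝ) ^ ((d:ℝ) + σ) * Kb) *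
          (znorm x + 1) ^ (-(p + σ)) := by ring
    _ = (T * (2:ℝ) ^ σ + (4:ℝ) ^ p * T * (2:ℝ) ^ σ + (4/3:ℝ) ^ ((d:ℝ) + σ) * Kb) *
          (znorm x + 1) ^ (-((d:ℝ) - 2 + σ)) := by
        congr 2

end Stmt3Aux
namespace Stmt3Aux
variable {d : ℕ}

/-- Near-region bound via symmetry cancellation. -/
lemma MB3 (hd : 2 < d) (σ : ℝ) (hσ0 : 0 < σ) :
    ∃ K, 0 < K ∧ ∀ (C : ℝ), 0 ≤ C → ∀ g : (Fin d → ℤ) → ℝ,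
      (∀ y, g (-y) = g y) → (∀ y, |g y| ≤ C * (znorm y + 1) ^ (-((d:ℝ) + σ))) →
      ∀ x : Fin d → ℤ, ∀ N : Finset (Fin d → ℤ),
      (∀ y, y ∈ N ↔ znorm y ≤ znorm x / 2) →
      |∑ y ∈ N, ((znorm (x - y) + 1) ^ (-((d:ℝ) - 2)) - (znorm x + 1) ^ (-((d:ℝ) - 2))) * g y|
        ≤ K * C * ((znorm x + 1) ^ (-(d:ℝ)) * ballB σ (znorm x / 2)) := by
  classical
  have hd2 : (2:ℝ) < (d:ℝ) := by exact_mod_cast hd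
  obtain ⟨K₁, hK₁, htrio⟩ := trio hd σ hσ0
  set p : ℝ := (d:ℝ) - 2 with hp
  have hp0 : 0 < p := by simp only [hp]; linarith
  set Ksd : ℝ := p * (p + 1) * 2 ^ (p + 3) + 4 * p with hKsd
  have hKsd0 : 0 < Ksd := by
    have : (0:ℝ) < (2:ℝ) ^ (p + 3) := Real.rpow_pos_of_pos (by norm_num) _
    simp only [hKsd]; positivity
  refine ⟨Ksd * K₁, by positivity, ?_⟩
  intro C hC g hgneg hg x N hN
  have hwx := w_pos x
  set Δ : (Fin d → ℤ) → ℝ :=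
    fun y => (znorm (x - y) + 1) ^ (-p) - (znorm x + 1) ^ (-p) with hΔ
  set S : ℝ := ∑ y ∈ N, Δ y * g y with hS
  -- symmetrize
  have hrefl : S = ∑ y ∈ N, Δ (-y) * g y := by
    have h1 : S = ∑ y ∈ N, Δ (-y) * g (-y) := by
      rw [hS]
      refine Finset.sum_nbij' (fun y => -y) (fun y => -y) ?_ ?_ ?_ ?_ ?_
      · intro a ha
        rw [hN] at ha ⊢
        rwa [znorm_neg]
      · intro a ha
        rw [hN] at ha ⊢
        rwa [znorm_neg]
      · intro a _; simp
      · intro a _; simp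
      · intro a _; rw [neg_neg]
    rw [h1]
    exact Finset.sum_congr rfl (fun y _ => by rw [hgneg y])
  have h2S : 2 * S = ∑ y ∈ N, (Δ y + Δ (-y)) * g y := by
    calc 2 * S = S + S := by ring
      _ = ∑ y ∈ N, Δ y * g y + ∑ y ∈ N, Δ (-y) * g y := by rw [← hS, ← hrefl]
      _ = ∑ y ∈ N, (Δ y + Δ (-y)) * g y := by
          rw [← Finset.sum_add_distrib]
          exact Finset.sum_congr rfl (fun y _ => by ring)
  -- pointwise second-difference bound
  have hpt : ∀ y ∈ N, |Δ y + Δ (-y)| ≤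
      Ksd * znorm y ^ 2 * (znorm x + 1) ^ (-(d:ℝ)) := by
    intro y hy
    rcases eq_or_ne y 0 with rfl | hy0
    · have h0 : Δ 0 = 0 := by simp [hΔ]
      rw [neg_zero, h0]
      simp only [add_zero, abs_zero]
      positivity
    · have ht1 : 1 ≤ znorm y := one_le_znorm hy0
      have hcy : 2 * znorm y ≤ znorm x := by
        have := (hN y).mp hy
        linarith
      have hsd := seconddiff_bound hp0 (a := znorm (x - y)) (b := znorm (x + y))
        (c := znorm x) (t := znorm y) ht1 hcy
        (abs_znorm_sub_le x y) (abs_znorm_add_le x y) (znorm_parallelogram x y)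
      have hval : Δ y + Δ (-y) = (znorm (x - y) + 1) ^ (-p) + (znorm (x + y) + 1) ^ (-p)
          - 2 * (znorm x + 1) ^ (-p) := by
        simp only [hΔ, sub_neg_eq_add]
        ring
      rw [hval]
      calc |(znorm (x - y) + 1) ^ (-p) + (znorm (x + y) + 1) ^ (-p)
            - 2 * (znorm x + 1) ^ (-p)|
          ≤ (p * (p + 1) * 2 ^ (p + 3) + 4 * p) * znorm y ^ 2 * (znorm x + 1) ^ (-(p + 2)) :=
            hsd
        _ = Ksd * znorm y ^ 2 * (znorm x + 1) ^ (-(d:ℝ)) := by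
            rw [hKsd, show -(p + 2) = -(d:ℝ) by simp only [hp]; ring]
  -- weight estimate
  have hwt : ∀ y : Fin d → ℤ, znorm y ^ 2 * (znorm y + 1) ^ (-((d:ℝ) + σ)) ≤
      (znorm y + 1) ^ (-((d:ℝ) - 2 + σ)) := by
    intro y
    have h1 : znorm y ^ 2 ≤ (znorm y + 1) ^ (2:ℝ) := by
      rw [show ((2:ℝ)) = ((2:ℕ):ℝ) by norm_num, Real.rpow_natCast]
      nlinarith [znorm_nonneg y]
    calc znorm y ^ 2 * (znorm y + 1) ^ (-((d:ℝ) + σ))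
        ≤ (znorm y + 1) ^ (2:ℝ) * (znorm y + 1) ^ (-((d:ℝ) + σ)) :=
          mul_le_mul_of_nonneg_right h1 (Real.rpow_nonneg (w_pos y).le _)
      _ = (znorm y + 1) ^ (-((d:ℝ) - 2 + σ)) := by
          rw [← Real.rpow_add (w_pos y)]
          congr 1; ring
  -- main chain
  have hchain : |2 * S| ≤ Ksd * C * (znorm x + 1) ^ (-(d:ℝ)) * (K₁ * ballB σ (znorm x / 2)) := by
    rw [h2S]
    calc |∑ y ∈ N, (Δ y + Δ (-y)) * g y| ≤ ∑ y ∈ N, |(Δ y + Δ (-y)) * g y| :=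
          Finset.abs_sum_le_sum_abs _ _
      _ = ∑ y ∈ N, |Δ y + Δ (-y)| * |g y| :=
          Finset.sum_congr rfl (fun y _ => abs_mul _ _)
      _ ≤ ∑ y ∈ N, Ksd * C * (znorm x + 1) ^ (-(d:ℝ)) * (znorm y + 1) ^ (-((d:ℝ) - 2 + σ)) := by
          apply Finset.sum_le_sum
          intro y hy
          calc |Δ y + Δ (-y)| * |g y|
              ≤ (Ksd * znorm y ^ 2 * (znorm x + 1) ^ (-(d:ℝ))) *
                (C * (znorm y + 1) ^ (-((d:ℝ) + σ))) :=
                mul_le_mul (hpt y hy) (hg y) (abs_nonneg _) (by positivity)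
            _ = Ksd * C * (znorm x + 1) ^ (-(d:ℝ)) *
                (znorm y ^ 2 * (znorm y + 1) ^ (-((d:ℝ) + σ))) := by ring
            _ ≤ Ksd * C * (znorm x + 1) ^ (-(d:ℝ)) *
                (znorm y + 1) ^ (-((d:ℝ) - 2 + σ)) := by
                apply mul_le_mul_of_nonneg_left (hwt y) (by positivity)
      _ = Ksd * C * (znorm x + 1) ^ (-(d:ℝ)) *
            ∑ y ∈ N, (znorm y + 1) ^ (-((d:ℝ) - 2 + σ)) := by rw [Finset.mul_sum]
      _ ≤ Ksd * C * (znorm x + 1) ^ (-(d:ℝ)) * (K₁ * ballB σ (znorm x / 2)) := by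
          apply mul_le_mul_of_nonneg_left _ (by positivity)
          apply htrio (znorm x / 2) (by linarith [znorm_nonneg x])
          intro y hy
          exact (hN y).mp hy
  have hSabs : |S| ≤ |2 * S| := by
    rw [abs_mul, abs_two]
    nlinarith [abs_nonneg S]
  calc |S| ≤ |2 * S| := hSabs
    _ ≤ Ksd * C * (znorm x + 1) ^ (-(d:ℝ)) * (K₁ * ballB σ (znorm x / 2)) := hchain
    _ = Ksd * K₁ * C * ((znorm x + 1) ^ (-(d:ℝ)) * ballB σ (znorm x / 2)) := by ring

end Stmt3Aux
namespace Stmt3Aux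
variable {d : ℕ}

lemma summable_and_tsum_le {F : (Fin d → ℤ) → ℝ} {c : ℝ} (h0 : ∀ y, 0 ≤ F y)
    (hb : ∀ t : Finset (Fin d → ℤ), ∑ y ∈ t, F y ≤ c) :
    Summable F ∧ ∑' y, F y ≤ c := by
  have hs : Summable F := summable_of_sum_le (Pi.le_def.mpr h0) hb
  exact ⟨hs, Summable.tsum_le_of_sum_le hs hb⟩

lemma tsum_subtype_le (s : Set (Fin d → ℤ)) (F : (Fin d → ℤ) → ℝ) {c : ℝ}
    (hsum : Summable (fun y : s => F ↑y))
    (hb : ∀ t : Finset (Fin d → ℤ), (∀ y ∈ t, y ∈ s) → ∑ y ∈ t, F y ≤ c) :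
    ∑' (y : s), F ↑y ≤ c := by
  apply Summable.tsum_le_of_sum_le hsum
  intro u
  have h : ∑ i ∈ u, F ↑i = ∑ y ∈ u.map (Function.Embedding.subtype _), F y := by
    rw [Finset.sum_map]; rfl
  rw [h]
  apply hb
  intro y hy
  obtain ⟨i, _, rfl⟩ := Finset.mem_map.mp hy
  exact i.2

end Stmt3Aux

open Stmt3Aux

theorem stmt3 (d : ℕ) (hd : 2 < d) (s : ℝ) (hs : 0 < s) :
    ∃ c : ℝ, 0 < c ∧ ∀ (A B C : ℝ), 0 < A → 0 < B → 0 < C →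
      ∀ f g : (Fin d → ℤ) → ℝ, ZdSymm g →
      (∀ x, |f x - A * (znorm x + 1) ^ (-((d : ℝ) - 2))| ≤
        B * (znorm x + 1) ^ (-((d : ℝ) - 2 + s))) →
      (∀ x, |g x| ≤ C * (znorm x + 1) ^ (-((d : ℝ) + s))) →
      ∀ x : Fin d → ℤ,
        (s ≠ 2 →
          |(∑' y : Fin d → ℤ, f (x - y) * g y) -
              (∑' y : Fin d → ℤ, g y) * (A * (znorm x + 1) ^ (-((d : ℝ) - 2)))| ≤
            c * C * (A + B) * (znorm x + 1) ^ (-((d : ℝ) - 2 + min s 2))) ∧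
        (s = 2 →
          |(∑' y : Fin d → ℤ, f (x - y) * g y) -
              (∑' y : Fin d → ℤ, g y) * (A * (znorm x + 1) ^ (-((d : ℝ) - 2)))| ≤
            c * C * (A + B) * Real.log (znorm x + 2) * (znorm x + 1) ^ (-(d : ℝ))) := by
  classical
  have hd2 : (2:ℝ) < (d:ℝ) := by exact_mod_cast hd
  set σ : ℝ := min s 3 with hσdef
  have hσ0 : 0 < σ := lt_min hs (by norm_num)
  have hσs : σ ≤ s := min_le_left _ _
  have hmin : min σ 2 = min s 2 := by
    rw [hσdef, min_assoc]
    norm_num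
  have hσ2iff : σ = 2 ↔ s = 2 := by
    constructor
    · intro h
      rcases le_total s 3 with h3 | h3
      · rwa [hσdef, min_eq_left h3] at h
      · rw [hσdef, min_eq_right h3] at h; norm_num at h
    · intro h; rw [hσdef, h]; norm_num
  obtain ⟨K₁, hK₁0, hMB1⟩ := MB1 hd σ hσ0
  obtain ⟨K₂, hK₂0, hMB2⟩ := MB2 hd σ hσ0
  obtain ⟨K₃, hK₃0, hMB3⟩ := MB3 hd σ hσ0
  have hlog2 : (0:ℝ) < Real.log 2 := Real.log_pos (by norm_num)
  set cT : ℝ := (Real.log 2)⁻¹ + 1 with hcT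
  have hcT0 : 0 < cT := by rw [hcT]; positivity
  set KK : ℝ := K₁ + K₃ + K₂ * cT with hKK
  have hKK0 : 0 < KK := by rw [hKK]; positivity
  refine ⟨KK, hKK0, ?_⟩
  intro A B C hA hB hC f g hZd hf hg x
  have hwx := w_pos x
  have hwx1 := one_le_w x
  -- weakened decay hypotheses with exponent σ
  have hrpow_mono : ∀ (z : Fin d → ℤ) (e₁ e₂ : ℝ), e₂ ≤ e₁ →
      (znorm z + 1) ^ (-e₁) ≤ (znorm z + 1) ^ (-e₂) := fun z e₁ e₂ h =>
    Real.rpow_le_rpow_of_exponent_le (one_le_w z) (by linarith)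
  have hgσ : ∀ y, |g y| ≤ C * (znorm y + 1) ^ (-((d:ℝ) + σ)) := by
    intro y
    exact (hg y).trans (mul_le_mul_of_nonneg_left
      (hrpow_mono y ((d:ℝ) + s) ((d:ℝ) + σ) (by linarith)) hC.le)
  have hE : ∀ z, |f z - A * (znorm z + 1) ^ (-((d:ℝ) - 2))| ≤
      B * (znorm z + 1) ^ (-((d:ℝ) - 2 + σ)) := by
    intro z
    exact (hf z).trans (mul_le_mul_of_nonneg_left
      (hrpow_mono z ((d:ℝ) - 2 + s) ((d:ℝ) - 2 + σ) (by linarith)) hB.le)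
  have hgneg : ∀ y, g (-y) = g y := by
    intro y
    have h := hZd (Equiv.refl _) (fun _ => true) y
    have h2 : (fun i => if (true:Bool) then -(y ((Equiv.refl (Fin d)) i)) else
        y ((Equiv.refl (Fin d)) i)) = -y := by
      funext i; simp
    rwa [h2] at h
  -- abbreviations
  set p : ℝ := (d:ℝ) - 2 with hp
  have hp0 : 0 < p := by rw [hp]; linarith
  set E : (Fin d → ℤ) → ℝ := fun z => f z - A * (znorm z + 1) ^ (-p) with hEdef
  set Δ : (Fin d → ℤ) → ℝ :=
    fun y => (znorm (x - y) + 1) ^ (-p) - (znorm x + 1) ^ (-p) with hΔdef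
  have hrpow_le_one : ∀ (z : Fin d → ℤ) (e : ℝ), 0 ≤ e → (znorm z + 1) ^ (-e) ≤ 1 :=
    fun z e he => Real.rpow_le_one_of_one_le_of_nonpos (one_le_w z) (by linarith)
  have hΔ2 : ∀ y, |Δ y| ≤ 2 := by
    intro y
    have hy : Δ y = (znorm (x - y) + 1) ^ (-p) - (znorm x + 1) ^ (-p) := rfl
    have h1 : (0:ℝ) ≤ (znorm (x - y) + 1) ^ (-p) := Real.rpow_nonneg (w_pos _).le _
    have h2 : (0:ℝ) ≤ (znorm x + 1) ^ (-p) := Real.rpow_nonneg (w_pos _).le _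
    have h3 := hrpow_le_one (x - y) p hp0.le
    have h4 := hrpow_le_one x p hp0.le
    rw [hy, abs_sub_le_iff]
    constructor <;> linarith
  -- summability
  have hW0 : ∀ y : Fin d → ℤ, 0 ≤ (znorm y + 1) ^ (-((d:ℝ) + σ)) :=
    fun y => Real.rpow_nonneg (w_pos y).le _
  obtain ⟨SW, _⟩ := summable_and_tsum_le hW0
    (fun t => sum_full ((d:ℝ) + σ) (by linarith) t)
  have Sg : Summable g := by
    apply Summable.of_norm_bounded (SW.mul_left C)
    intro y
    rw [Real.norm_eq_abs]
    exact hgσ y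
  have Sgabs : Summable (fun y => |g y|) := Sg.abs
  have hfb : ∀ z, |f z| ≤ A + B := by
    intro z
    have h1 := hE z
    have h2 : A * (znorm z + 1) ^ (-p) ≤ A * 1 :=
      mul_le_mul_of_nonneg_left (hrpow_le_one z p hp0.le) hA.le
    have h3 : B * (znorm z + 1) ^ (-((d:ℝ) - 2 + σ)) ≤ B * 1 :=
      mul_le_mul_of_nonneg_left (hrpow_le_one z ((d:ℝ) - 2 + σ) (by linarith)) hB.le
    have h4 : (0:ℝ) ≤ A * (znorm z + 1) ^ (-p) :=
      mul_nonneg hA.le (Real.rpow_nonneg (w_pos z).le _)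
    rw [abs_le]
    rw [abs_le] at h1
    constructor <;> rw [hp] at * <;> nlinarith [h1.1, h1.2]
  have Sfg : Summable (fun y => f (x - y) * g y) := by
    apply Summable.of_norm_bounded (Sgabs.mul_left (A + B))
    intro y
    rw [Real.norm_eq_abs, abs_mul]
    exact mul_le_mul_of_nonneg_right (hfb (x - y)) (abs_nonneg _)
  have SEg : Summable (fun y => E (x - y) * g y) := by
    apply Summable.of_norm_bounded (Sgabs.mul_left (A + B))
    intro y
    rw [Real.norm_eq_abs, abs_mul]
    apply mul_le_mul_of_nonneg_right _ (abs_nonneg _)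
    have h1 := hE (x - y)
    have h2 : B * (znorm (x - y) + 1) ^ (-((d:ℝ) - 2 + σ)) ≤ B :=
      (mul_le_mul_of_nonneg_left (hrpow_le_one (x - y) _ (by linarith)) hB.le).trans
        (by linarith)
    rw [hEdef]
    simp only
    rw [hp]
    exact (h1.trans h2).trans (by linarith)
  have SΔg : Summable (fun y => Δ y * g y) := by
    apply Summable.of_norm_bounded (Sgabs.mul_left 2)
    intro y
    rw [Real.norm_eq_abs, abs_mul]
    exact mul_le_mul_of_nonneg_right (hΔ2 y) (abs_nonneg _)
  -- the difference rewrites as two series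
  have hsplit : (∑' y, f (x - y) * g y) - (∑' y, g y) * (A * (znorm x + 1) ^ (-((d:ℝ)-2)))
      = (∑' y, E (x - y) * g y) + A * (∑' y, Δ y * g y) := by
    have h1 : (∑' y, g y) * (A * (znorm x + 1) ^ (-((d:ℝ)-2))) =
        ∑' y, g y * (A * (znorm x + 1) ^ (-((d:ℝ)-2))) := (tsum_mul_right).symm
    rw [h1, ← Summable.tsum_sub Sfg (Sg.mul_right _)]
    rw [← tsum_mul_left (a := A) (f := fun y => Δ y * g y),
      ← Summable.tsum_add SEg ((SΔg).mul_left A)]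
    apply tsum_congr
    intro y
    rw [hEdef, hΔdef]
    simp only
    rw [hp]
    ring
  -- bound the E-term
  have hW1 : ∀ y : Fin d → ℤ, (0:ℝ) ≤
      (znorm (x - y) + 1) ^ (-((d:ℝ) - 2 + σ)) * (znorm y + 1) ^ (-((d:ℝ) + σ)) :=
    fun y => mul_nonneg (Real.rpow_nonneg (w_pos _).le _) (Real.rpow_nonneg (w_pos _).le _)
  obtain ⟨SW1, hTW1⟩ := summable_and_tsum_le hW1 (hMB1 x)
  have hEbound : |∑' y, E (x - y) * g y| ≤ B * C * (K₁ * TB d σ x) := by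
    have hsumabs : Summable (fun y => |E (x - y) * g y|) := SEg.abs
    have hnorm : |∑' y, E (x - y) * g y| ≤ ∑' y, |E (x - y) * g y| := by
      have h := norm_tsum_le_tsum_norm (f := fun y => E (x - y) * g y)
        (by simpa only [Real.norm_eq_abs] using hsumabs)
      simpa only [Real.norm_eq_abs] using h
    have hcomp : ∑' y, |E (x - y) * g y| ≤
        ∑' y, B * C * ((znorm (x - y) + 1) ^ (-((d:ℝ) - 2 + σ)) *
          (znorm y + 1) ^ (-((d:ℝ) + σ))) := by
      apply Summable.tsum_le_tsum _ SEg.abs (SW1.mul_left (B * C))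
      intro y
      rw [abs_mul]
      have hEy : E (x - y) = f (x - y) - A * (znorm (x - y) + 1) ^ (-p) := rfl
      calc |E (x - y)| * |g y|
          ≤ (B * (znorm (x - y) + 1) ^ (-((d:ℝ) - 2 + σ))) *
            (C * (znorm y + 1) ^ (-((d:ℝ) + σ))) := by
            apply mul_le_mul _ (hgσ y) (abs_nonneg _)
              (mul_nonneg hB.le (Real.rpow_nonneg (w_pos _).le _))
            rw [hEy, hp]; exact hE (x - y)
        _ = B * C * ((znorm (x - y) + 1) ^ (-((d:ℝ) - 2 + σ)) *
            (znorm y + 1) ^ (-((d:ℝ) + σ))) := by ring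
    calc |∑' y, E (x - y) * g y| ≤ ∑' y, |E (x - y) * g y| := hnorm
      _ ≤ ∑' y, B * C * ((znorm (x - y) + 1) ^ (-((d:ℝ) - 2 + σ)) *
            (znorm y + 1) ^ (-((d:ℝ) + σ))) := hcomp
      _ = B * C * ∑' y, ((znorm (x - y) + 1) ^ (-((d:ℝ) - 2 + σ)) *
            (znorm y + 1) ^ (-((d:ℝ) + σ))) := tsum_mul_left
      _ ≤ B * C * (K₁ * TB d σ x) := by
          apply mul_le_mul_of_nonneg_left hTW1 (by positivity)
  -- the near set
  set R : ℝ := znorm x / 2 with hR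
  have hR0 : 0 ≤ R := by rw [hR]; linarith [znorm_nonneg x]
  set N : Finset (Fin d → ℤ) := (ballF d ⌈R⌉₊).filter (fun y => znorm y ≤ R) with hNdef
  have hN : ∀ y, y ∈ N ↔ znorm y ≤ R := by
    intro y
    rw [hNdef, Finset.mem_filter]
    constructor
    · exact fun h => h.2
    · intro h
      exact ⟨mem_ballF (h.trans (Nat.le_ceil R)), h⟩
  -- split the Δ-term
  have hΔsplit : ∑' y, Δ y * g y = (∑ y ∈ N, Δ y * g y) +
      ∑' (y : ↑((↑N : Set (Fin d → ℤ))ᶜ)), Δ ↑y * g ↑y :=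
    (Summable.sum_add_tsum_compl (s := N) SΔg).symm
  -- near part
  have hnear : |∑ y ∈ N, Δ y * g y| ≤ K₃ * C * TB d σ x := by
    have h1 := hMB3 C hC.le g hgneg hgσ x N hN
    have h2 : (znorm x + 1) ^ (-(d:ℝ)) * ballB σ R ≤ TB d σ x :=
      combine σ hσ0 x hR0 (by rw [hR]; linarith [znorm_nonneg x])
    calc |∑ y ∈ N, Δ y * g y| ≤ K₃ * C * ((znorm x + 1) ^ (-(d:ℝ)) * ballB σ R) := h1
      _ ≤ K₃ * C * TB d σ x := mul_le_mul_of_nonneg_left h2 (by positivity)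
  -- far part
  have hfar : |∑' (y : ↑((↑N : Set (Fin d → ℤ))ᶜ)), Δ ↑y * g ↑y| ≤
      C * (K₂ * (znorm x + 1) ^ (-((d:ℝ) - 2 + σ))) := by
    have hsub : Summable (fun y : ↑((↑N : Set (Fin d → ℤ))ᶜ) => |Δ ↑y * g ↑y|) := by
      have := (SΔg.abs).subtype ((↑N : Set (Fin d → ℤ))ᶜ)
      exact this
    have hnorm : |∑' (y : ↑((↑N : Set (Fin d → ℤ))ᶜ)), Δ ↑y * g ↑y| ≤
        ∑' (y : ↑((↑N : Set (Fin d → ℤ))ᶜ)), |Δ ↑y * g ↑y| := by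
      have h := norm_tsum_le_tsum_norm (f := fun y : ↑((↑N : Set (Fin d → ℤ))ᶜ) =>
        Δ ↑y * g ↑y) (by simpa only [Real.norm_eq_abs] using hsub)
      simpa only [Real.norm_eq_abs] using h
    have htsum : ∑' (y : ↑((↑N : Set (Fin d → ℤ))ᶜ)), |Δ ↑y * g ↑y| ≤
        C * (K₂ * (znorm x + 1) ^ (-((d:ℝ) - 2 + σ))) := by
      apply tsum_subtype_le ((↑N : Set (Fin d → ℤ))ᶜ) (fun y => |Δ y * g y|) hsub
      intro t ht
      have hprop : ∀ y ∈ t, znorm x / 2 < znorm y := by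
        intro y hy
        have := ht y hy
        simp only [Set.mem_compl_iff, Finset.coe_sort_coe, Finset.mem_coe] at this
        rw [hN] at this
        push_neg at this
        rw [hR] at this
        exact this
      have hMB2x := hMB2 x t hprop
      have hptwise : ∀ y ∈ t, |Δ y * g y| ≤
          C * (((znorm (x - y) + 1) ^ (-((d:ℝ) - 2)) + (znorm x + 1) ^ (-((d:ℝ) - 2))) *
            (znorm y + 1) ^ (-((d:ℝ) + σ))) := by
        intro y _
        rw [abs_mul]
        have hΔb : |Δ y| ≤ (znorm (x - y) + 1) ^ (-((d:ℝ) - 2)) +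
            (znorm x + 1) ^ (-((d:ℝ) - 2)) := by
          have hy : Δ y = (znorm (x - y) + 1) ^ (-p) - (znorm x + 1) ^ (-p) := rfl
          rw [hy, hp]
          apply (abs_sub _ _).trans
          rw [abs_of_nonneg (Real.rpow_nonneg (w_pos _).le _),
            abs_of_nonneg (Real.rpow_nonneg (w_pos _).le _)]
        calc |Δ y| * |g y| ≤ ((znorm (x - y) + 1) ^ (-((d:ℝ) - 2)) +
              (znorm x + 1) ^ (-((d:ℝ) - 2))) * (C * (znorm y + 1) ^ (-((d:ℝ) + σ))) := by
              apply mul_le_mul hΔb (hgσ y) (abs_nonneg _)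
              have := Real.rpow_nonneg (w_pos (x - y)).le (-((d:ℝ) - 2))
              have := Real.rpow_nonneg (w_pos x).le (-((d:ℝ) - 2))
              linarith
          _ = C * (((znorm (x - y) + 1) ^ (-((d:ℝ) - 2)) + (znorm x + 1) ^ (-((d:ℝ) - 2))) *
              (znorm y + 1) ^ (-((d:ℝ) + σ))) := by ring
      calc ∑ y ∈ t, |Δ y * g y|
          ≤ ∑ y ∈ t, C * (((znorm (x - y) + 1) ^ (-((d:ℝ) - 2)) +
              (znorm x + 1) ^ (-((d:ℝ) - 2))) * (znorm y + 1) ^ (-((d:ℝ) + σ))) :=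
            Finset.sum_le_sum hptwise
        _ = C * ∑ y ∈ t, (((znorm (x - y) + 1) ^ (-((d:ℝ) - 2)) +
              (znorm x + 1) ^ (-((d:ℝ) - 2))) * (znorm y + 1) ^ (-((d:ℝ) + σ))) := by
            rw [Finset.mul_sum]
        _ ≤ C * (K₂ * (znorm x + 1) ^ (-((d:ℝ) - 2 + σ))) :=
            mul_le_mul_of_nonneg_left hMB2x hC.le
    exact hnorm.trans htsum
  -- convert the far bound to TB
  have hfarTB : |∑' (y : ↑((↑N : Set (Fin d → ℤ))ᶜ)), Δ ↑y * g ↑y| ≤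
      C * (K₂ * cT * TB d σ x) := by
    have h1 : (znorm x + 1) ^ (-((d:ℝ) - 2 + σ)) ≤ cT * TB d σ x := by
      have := le_TB hd σ hσ0 x (e := (d:ℝ) - 2 + σ)
        (by have : min σ 2 ≤ σ := min_le_left _ _; linarith)
      rw [hcT]
      have hTBp := TB_pos (d := d) σ x
      calc (znorm x + 1) ^ (-((d:ℝ) - 2 + σ)) ≤ (Real.log 2)⁻¹ * TB d σ x + TB d σ x := this
        _ = ((Real.log 2)⁻¹ + 1) * TB d σ x := by ring
    calc |∑' (y : ↑((↑N : Set (Fin d → ℤ))ᶜ)), Δ ↑y * g ↑y|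
        ≤ C * (K₂ * (znorm x + 1) ^ (-((d:ℝ) - 2 + σ))) := hfar
      _ ≤ C * (K₂ * (cT * TB d σ x)) := by
          apply mul_le_mul_of_nonneg_left _ hC.le
          exact mul_le_mul_of_nonneg_left h1 hK₂0.le
      _ = C * (K₂ * cT * TB d σ x) := by ring
  -- total bound
  have hTBp := TB_pos (d := d) σ x
  have htotal : |(∑' y, f (x - y) * g y) -
      (∑' y, g y) * (A * (znorm x + 1) ^ (-((d:ℝ)-2)))| ≤ KK * C * (A + B) * TB d σ x := by
    rw [hsplit]
    calc |(∑' y, E (x - y) * g y) + A * (∑' y, Δ y * g y)|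
        ≤ |∑' y, E (x - y) * g y| + A * |∑' y, Δ y * g y| := by
          have h := abs_add_le (∑' y, E (x - y) * g y) (A * (∑' y, Δ y * g y))
          rw [abs_mul, abs_of_pos hA] at h
          exact h
      _ ≤ B * C * (K₁ * TB d σ x) + A * (K₃ * C * TB d σ x + C * (K₂ * cT * TB d σ x)) := by
          apply add_le_add hEbound
          apply mul_le_mul_of_nonneg_left _ hA.le
          rw [hΔsplit]
          exact (abs_add_le _ _).trans (add_le_add hnear hfarTB)
      _ ≤ KK * C * (A + B) * TB d σ x := by
          have e1 : B * C * (K₁ * TB d σ x) + A * (K₃ * C * TB d σ x +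
              C * (K₂ * cT * TB d σ x)) =
              C * TB d σ x * (B * K₁ + (A * K₃ + A * (K₂ * cT))) := by ring
          have e2 : KK * C * (A + B) * TB d σ x =
              C * TB d σ x * ((A + B) * K₁ + ((A + B) * K₃ + (A + B) * (K₂ * cT))) := by
            rw [hKK]; ring
          rw [e1, e2]
          apply mul_le_mul_of_nonneg_left _ (mul_nonneg hC.le hTBp.le)
          apply add_le_add
          · exact mul_le_mul_of_nonneg_right (by linarith) hK₁0.le
          apply add_le_add
          · exact mul_le_mul_of_nonneg_right (by linarith) hK₃0.le
          · exact mul_le_mul_of_nonneg_right (by linarith) (by positivity)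
  constructor
  · -- s ≠ 2
    intro hs2
    have hσ2 : σ ≠ 2 := fun h => hs2 (hσ2iff.mp h)
    have hTBval : TB d σ x = (znorm x + 1) ^ (-((d:ℝ) - 2 + min s 2)) := by
      rw [TB, if_neg hσ2, hmin]
    calc |(∑' y, f (x - y) * g y) - (∑' y, g y) * (A * (znorm x + 1) ^ (-((d:ℝ)-2)))|
        ≤ KK * C * (A + B) * TB d σ x := htotal
      _ = KK * C * (A + B) * (znorm x + 1) ^ (-((d:ℝ) - 2 + min s 2)) := by rw [hTBval]
  · -- s = 2
    intro hs2
    have hσ2 : σ = 2 := hσ2iff.mpr hs2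
    have hTBval : TB d σ x = Real.log (znorm x + 2) * (znorm x + 1) ^ (-(d:ℝ)) := by
      rw [TB, if_pos hσ2]
    calc |(∑' y, f (x - y) * g y) - (∑' y, g y) * (A * (znorm x + 1) ^ (-((d:ℝ)-2)))|
        ≤ KK * C * (A + B) * TB d σ x := htotal
      _ = KK * C * (A + B) * Real.log (znorm x + 2) * (znorm x + 1) ^ (-(d:ℝ)) := by
          rw [hTBval]; ring
end
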